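/- arXiv:1402.2960 — 6 statements merged into one kernel-verified Lean document; each statement's English description precedes it below -/
import Mathlib

section
/- For all sequences a, b : ℕ → ℚ indexed from 1 and all natural numbers n and k, the partial Bell polynomial of the termwise sum satisfies B(n,k; a+b) = Σ_{r+s=k} Σ_{i+j=n} C(n,i)·B(i,r;a)·B(j,s;b), where (a+b)_m = a_m + b_m and C denotes the binomial coefficient. -/
set_option maxHeartbeats 1000000

open Finset BigOperators

/-- The partial Bell polynomial value `B(n,k;a)`. -/
noncomputable def partialBell (a : ℕ → ℚ) (n k : ℕ) : ℚ :=
  ∑ j : Fin n → Fin (n + 1),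
    if (∑ i, (j i : ℕ)) = k ∧ (∑ i, (i.1 + 1) * (j i : ℕ)) = n then
      (n.factorial : ℚ) /
          ((∏ i, (j i : ℕ).factorial * ((i.1 + 1).factorial) ^ (j i : ℕ) : ℕ) : ℚ) *
        ∏ i, a (i.1 + 1) ^ (j i : ℕ)
    else 0

noncomputable def genPoly (a : ℕ → ℚ) (N : ℕ) : Polynomial ℚ :=
  ∑ m ∈ Finset.Icc 1 N, Polynomial.C (a m / m.factorial) * Polynomial.X ^ m

lemma coeff_genPoly_pow (a : ℕ → ℚ) (N k n : ℕ) :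
    ((genPoly a N) ^ k).coeff n =
      ∑ j ∈ Finset.piAntidiag (Finset.Icc 1 N) k,
        if ∑ m ∈ Finset.Icc 1 N, m * j m = n then
          (Nat.multinomial (Finset.Icc 1 N) j : ℚ) *
            ∏ m ∈ Finset.Icc 1 N, (a m / m.factorial) ^ j m
        else 0 := by
  rw [genPoly, Finset.sum_pow_eq_sum_piAntidiag, Polynomial.finset_sum_coeff]
  refine Finset.sum_congr rfl fun j hj => ?_
  have : ∏ m ∈ Finset.Icc 1 N, (Polynomial.C (a m / m.factorial) * Polynomial.X ^ m) ^ j m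
      = Polynomial.C (∏ m ∈ Finset.Icc 1 N, (a m / m.factorial) ^ j m) *
          Polynomial.X ^ (∑ m ∈ Finset.Icc 1 N, m * j m) := by
    rw [map_prod, ← Finset.prod_pow_eq_pow_sum, ← Finset.prod_mul_distrib]
    refine Finset.prod_congr rfl fun m _ => ?_
    rw [mul_pow, ← Polynomial.C_pow, ← pow_mul]
  rw [this, ← Polynomial.C_eq_natCast, ← mul_assoc, ← Polynomial.C_mul,
    Polynomial.coeff_C_mul, Polynomial.coeff_X_pow]
  split_ifs with h1 h2 h3 <;> first | exact (h2 h1.symm).elim | exact (h1 h3.symm).elim | simp [mul_comm]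

lemma prod_Icc_one {M : Type*} [CommMonoid M] (n : ℕ) (f : ℕ → M) :
    ∏ m ∈ Finset.Icc 1 n, f m = ∏ i : Fin n, f (i.1 + 1) := by
  rw [Fin.prod_univ_eq_prod_range (fun i => f (i + 1)) n]
  induction n with
  | zero => simp
  | succ n ih => rw [Finset.prod_Icc_succ_top (by omega), ih, Finset.prod_range_succ]

lemma sum_Icc_one {M : Type*} [AddCommMonoid M] (n : ℕ) (f : ℕ → M) :
    ∑ m ∈ Finset.Icc 1 n, f m = ∑ i : Fin n, f (i.1 + 1) := by
  rw [Fin.sum_univ_eq_sum_range (fun i => f (i + 1)) n]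
  induction n with
  | zero => simp
  | succ n ih => rw [Finset.sum_Icc_succ_top (by omega), ih, Finset.sum_range_succ]

lemma restrict_prod {M : Type*} [CommMonoid M] (n N : ℕ) (hn : n ≤ N) (j : Fin n → Fin (n + 1))
    (g : ℕ → ℕ → M) (hg : ∀ m, g m 0 = 1) :
    ∏ m ∈ Finset.Icc 1 N,
        g m (if h : 1 ≤ m ∧ m ≤ n then (j ⟨m - 1, by omega⟩ : ℕ) else 0) =
      ∏ i : Fin n, g (i.1 + 1) (j i) := by
  rw [← Finset.prod_subset (Finset.Icc_subset_Icc_right hn) (fun m _ hm => by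
      rw [dif_neg (by simp [Finset.mem_Icc] at hm ⊢; omega), hg])]
  rw [prod_Icc_one n]
  refine Finset.prod_congr rfl fun i _ => ?_
  rw [dif_pos ⟨by omega, by omega⟩]
  congr 2

lemma restrict_sum (n N : ℕ) (hn : n ≤ N) (j : Fin n → Fin (n + 1))
    (g : ℕ → ℕ → ℕ) (hg : ∀ m, g m 0 = 0) :
    ∑ m ∈ Finset.Icc 1 N,
        g m (if h : 1 ≤ m ∧ m ≤ n then (j ⟨m - 1, by omega⟩ : ℕ) else 0) =
      ∑ i : Fin n, g (i.1 + 1) (j i) := by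
  rw [← Finset.sum_subset (Finset.Icc_subset_Icc_right hn) (fun m _ hm => by
      rw [dif_neg (by simp [Finset.mem_Icc] at hm ⊢; omega), hg])]
  rw [sum_Icc_one n]
  refine Finset.sum_congr rfl fun i _ => ?_
  rw [dif_pos ⟨by omega, by omega⟩]
  congr 2

lemma partialBell_eq_coeff (a : ℕ → ℚ) (n k N : ℕ) (hn : n ≤ N) :
    partialBell a n k =
      (n.factorial : ℚ) / (k.factorial : ℚ) * ((genPoly a N) ^ k).coeff n := by
  rw [coeff_genPoly_pow, Finset.mul_sum, partialBell]
  simp only [mul_ite, mul_zero]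
  rw [← Finset.sum_filter, ← Finset.sum_filter]
  refine Finset.sum_nbij' (fun j m => if h : 1 ≤ m ∧ m ≤ n then (j ⟨m - 1, by omega⟩ : ℕ) else 0)
    (fun j' i => (⟨min (j' (i.1 + 1)) n, by omega⟩ : Fin (n + 1))) ?_ ?_ ?_ ?_ ?_
  · -- forward membership
    intro j hj
    simp only [Finset.mem_filter, Finset.mem_univ, true_and] at hj
    obtain ⟨hk, hd⟩ := hj
    have hsub : Finset.Icc 1 n ⊆ Finset.Icc 1 N := Finset.Icc_subset_Icc_right hn
    have hrestr : ∀ (g : ℕ → ℕ → ℕ),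
        (∀ m, g m 0 = 0) →
        ∑ m ∈ Finset.Icc 1 N, g m (if h : 1 ≤ m ∧ m ≤ n then (j ⟨m - 1, by omega⟩ : ℕ) else 0)
          = ∑ i : Fin n, g (i.1 + 1) (j i) := by
      intro g hg
      rw [← Finset.sum_subset hsub (fun m _ hm => by
        rw [dif_neg (by simp [Finset.mem_Icc] at hm ⊢; omega), hg])]
      rw [sum_Icc_one n]
      refine Finset.sum_congr rfl fun i _ => ?_
      rw [dif_pos ⟨by omega, by omega⟩]
      congr 1
    simp only [Finset.mem_filter, Finset.mem_piAntidiag]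
    refine ⟨⟨?_, ?_⟩, ?_⟩
    · rw [hrestr (fun m v => v) (fun m => rfl)]; exact hk
    · intro m hm
      rw [Finset.mem_Icc]
      by_contra hmem
      rw [dif_neg (by omega)] at hm
      exact hm rfl
    · rw [hrestr (fun m v => m * v) (fun m => mul_zero m)]; exact hd
  · -- backward membership
    intro j' hj'
    simp only [Finset.mem_filter, Finset.mem_piAntidiag] at hj'
    obtain ⟨⟨hk, hsupp⟩, hd⟩ := hj'
    have hbound : ∀ m, 1 ≤ m → m ≤ N → m * j' m ≤ n := by
      intro m h1 h2
      rw [← hd]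
      exact Finset.single_le_sum (f := fun m => m * j' m) (fun _ _ => Nat.zero_le _)
        (Finset.mem_Icc.mpr ⟨h1, h2⟩)
    have hzero : ∀ m, m ∉ Finset.Icc 1 n → j' m = 0 := by
      intro m hm
      by_contra h
      have h1 := hsupp m h
      rw [Finset.mem_Icc] at h1
      have h2 := hbound m h1.1 h1.2
      rw [Finset.mem_Icc] at hm
      have h3 : 1 ≤ j' m := Nat.one_le_iff_ne_zero.mpr h
      have h4 : m * 1 ≤ m * j' m := Nat.mul_le_mul_left m h3
      omega
    have hle : ∀ i : Fin n, j' (i.1 + 1) ≤ n := by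
      intro i
      have := hbound (i.1 + 1) (by omega) (by omega)
      nlinarith
    have hrestr : ∀ (g : ℕ → ℕ → ℕ), (∀ m, g m 0 = 0) →
        ∑ i : Fin n, g (i.1 + 1) (min (j' (i.1 + 1)) n) = ∑ m ∈ Finset.Icc 1 N, g m (j' m) := by
      intro g hg
      rw [Finset.sum_congr rfl (fun (i : Fin n) _ => by
        rw [min_eq_left (hle i)] : ∀ _, _), ← sum_Icc_one n (fun m => g m (j' m))]
      exact Finset.sum_subset (Finset.Icc_subset_Icc_right hn) (fun m _ hm => by
        rw [hzero m hm, hg])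
    simp only [Finset.mem_filter, Finset.mem_univ, true_and]
    constructor
    · rw [hrestr (fun m v => v) (fun m => rfl)]; exact hk
    · rw [hrestr (fun m v => m * v) (fun m => mul_zero m)]; exact hd
  · -- left inverse
    intro j hj
    funext i
    apply Fin.ext
    simp only
    rw [dif_pos ⟨by omega, by omega⟩]
    have : (⟨i.1 + 1 - 1, by omega⟩ : Fin n) = i := by apply Fin.ext; simp
    rw [this, min_eq_left (by omega)]
  · -- right inverse
    intro j' hj'
    simp only [Finset.mem_filter, Finset.mem_piAntidiag] at hj'
    obtain ⟨⟨hk, hsupp⟩, hd⟩ := hj'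
    have hbound : ∀ m, 1 ≤ m → m ≤ N → m * j' m ≤ n := by
      intro m h1 h2
      rw [← hd]
      exact Finset.single_le_sum (f := fun m => m * j' m) (fun _ _ => Nat.zero_le _)
        (Finset.mem_Icc.mpr ⟨h1, h2⟩)
    have hzero : ∀ m, j' m ≠ 0 → 1 ≤ m ∧ m ≤ n := by
      intro m h
      have h1 := hsupp m h
      rw [Finset.mem_Icc] at h1
      have := hbound m h1.1 h1.2
      constructor
      · omega
      · nlinarith [Nat.one_le_iff_ne_zero.mpr h]
    funext m
    beta_reduce
    by_cases h : 1 ≤ m ∧ m ≤ n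
    · rw [dif_pos h]
      simp only
      have hm : m - 1 + 1 = m := by omega
      rw [hm, min_eq_left]
      have := hbound m h.1 (by omega)
      nlinarith
    · rw [dif_neg h]
      by_contra hc
      exact h (hzero m (fun h0 => hc h0.symm))
  · -- term equality
    intro j hj
    simp only [Finset.mem_filter, Finset.mem_univ, true_and] at hj
    obtain ⟨hk, hd⟩ := hj
    beta_reduce
    have e1 : ∏ m ∈ Finset.Icc 1 N,
        (a m / m.factorial) ^ (if h : 1 ≤ m ∧ m ≤ n then (j ⟨m - 1, by omega⟩ : ℕ) else 0) =
        ∏ i : Fin n, (a (i.1 + 1) / (i.1 + 1).factorial) ^ (j i : ℕ) :=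
      restrict_prod n N hn j (fun m v => (a m / m.factorial) ^ v) (fun m => pow_zero _)
    have e2 : ∑ m ∈ Finset.Icc 1 N,
        (if h : 1 ≤ m ∧ m ≤ n then (j ⟨m - 1, by omega⟩ : ℕ) else 0) = k := by
      rw [restrict_sum n N hn j (fun m v => v) (fun m => rfl)]; exact hk
    have e3 : ∏ m ∈ Finset.Icc 1 N,
        (Nat.factorial (if h : 1 ≤ m ∧ m ≤ n then (j ⟨m - 1, by omega⟩ : ℕ) else 0)) =
        ∏ i : Fin n, Nat.factorial (j i : ℕ) :=
      restrict_prod n N hn j (fun m v => v.factorial) (fun m => rfl)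
    have hmult := Nat.multinomial_spec (Finset.Icc 1 N)
      (fun m => if h : 1 ≤ m ∧ m ≤ n then (j ⟨m - 1, by omega⟩ : ℕ) else 0)
    beta_reduce at hmult
    rw [e2, e3] at hmult
    rw [e1]
    set A : ℚ := ∏ i : Fin n, ((Nat.factorial (j i : ℕ) : ℕ) : ℚ) with hA
    set B : ℚ := ∏ i : Fin n, (((i.1 + 1).factorial : ℕ) : ℚ) ^ (j i : ℕ) with hB
    have hP : ((∏ i : Fin n, (Nat.factorial (j i : ℕ) * ((i.1 + 1).factorial) ^ (j i : ℕ)) : ℕ) : ℚ)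
        = A * B := by
      push_cast [Finset.prod_mul_distrib]
      rfl
    have hsplit : ∏ i : Fin n, (a (i.1 + 1) / (i.1 + 1).factorial) ^ (j i : ℕ)
        = (∏ i : Fin n, a (i.1 + 1) ^ (j i : ℕ)) / B := by
      rw [← Finset.prod_div_distrib]
      exact Finset.prod_congr rfl fun i _ => div_pow _ _ _
    have hAne : A ≠ 0 := by
      rw [hA]
      exact Finset.prod_ne_zero_iff.mpr fun i _ => Nat.cast_ne_zero.mpr (Nat.factorial_ne_zero _)
    have hBne : B ≠ 0 := by
      rw [hB]
      exact Finset.prod_ne_zero_iff.mpr fun i _ =>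
        pow_ne_zero _ (Nat.cast_ne_zero.mpr (Nat.factorial_ne_zero _))
    have hkne : ((k.factorial : ℕ) : ℚ) ≠ 0 := Nat.cast_ne_zero.mpr (Nat.factorial_ne_zero _)
    have hcast := congrArg (fun x : ℕ => (x : ℚ)) hmult
    push_cast at hcast
    have h6 : (Nat.multinomial (Finset.Icc 1 N)
        (fun m => if h : 1 ≤ m ∧ m ≤ n then (j ⟨m - 1, by omega⟩ : ℕ) else 0) : ℚ) * A
        = (k.factorial : ℚ) := by
      rw [hA, mul_comm]
      exact_mod_cast hcast
    rw [hP, hsplit, (eq_div_iff hAne).mpr h6]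
    field_simp

/-- `B(n,k;a+b) = Σ_{r+s=k} Σ_{i+j=n} C(n,i)·B(i,r;a)·B(j,s;b)`. -/
theorem partialBell_add (a b : ℕ → ℚ) (n k : ℕ) :
    partialBell (fun m => a m + b m) n k =
      ∑ rs ∈ Finset.HasAntidiagonal.antidiagonal k, ∑ ij ∈ Finset.HasAntidiagonal.antidiagonal n,
        (n.choose ij.1 : ℚ) * partialBell a ij.1 rs.1 * partialBell b ij.2 rs.2 := by
  have hgen : genPoly (fun m => a m + b m) n = genPoly a n + genPoly b n := by
    rw [genPoly, genPoly, genPoly, ← Finset.sum_add_distrib]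
    refine Finset.sum_congr rfl fun m _ => ?_
    rw [add_div, map_add, add_mul]
  rw [partialBell_eq_coeff (fun m => a m + b m) n k n le_rfl, hgen, add_pow,
    Polynomial.finset_sum_coeff, Finset.mul_sum,
    Finset.Nat.sum_antidiagonal_eq_sum_range_succ_mk]
  refine Finset.sum_congr rfl fun r hr => ?_
  rw [Finset.mem_range] at hr
  rw [← Polynomial.C_eq_natCast, Polynomial.coeff_mul_C, Polynomial.coeff_mul,
    Finset.sum_mul, Finset.mul_sum]
  refine Finset.sum_congr rfl fun ij hij => ?_
  rw [Finset.HasAntidiagonal.mem_antidiagonal] at hij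
  rw [partialBell_eq_coeff a ij.1 r n (by omega), partialBell_eq_coeff b ij.2 (k - r) n (by omega)]
  have hc1 : (k.choose r : ℚ) = (k.factorial : ℚ) / (r.factorial * (k - r).factorial) :=
    Nat.cast_choose ℚ (by omega)
  have hc2 : (n.choose ij.1 : ℚ) = (n.factorial : ℚ) / (ij.1.factorial * ij.2.factorial) := by
    have h9 : n - ij.1 = ij.2 := by omega
    rw [Nat.cast_choose ℚ (show ij.1 ≤ n by omega), h9]
  rw [hc1, hc2]
  have f1 : ((r.factorial : ℕ) : ℚ) ≠ 0 := Nat.cast_ne_zero.mpr (Nat.factorial_ne_zero _)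
  have f2 : (((k - r).factorial : ℕ) : ℚ) ≠ 0 := Nat.cast_ne_zero.mpr (Nat.factorial_ne_zero _)
  have f3 : ((ij.1.factorial : ℕ) : ℚ) ≠ 0 := Nat.cast_ne_zero.mpr (Nat.factorial_ne_zero _)
  have f4 : ((ij.2.factorial : ℕ) : ℚ) ≠ 0 := Nat.cast_ne_zero.mpr (Nat.factorial_ne_zero _)
  have f5 : ((k.factorial : ℕ) : ℚ) ≠ 0 := Nat.cast_ne_zero.mpr (Nat.factorial_ne_zero _)
  field_simp
end

section
/- Convolution formula: let a, b : ℕ → ℚ be sequences indexed from 1 with a_1 = b_1 = 1, and define the sequence c by c_m = (1/(m+1))·Σ_{i=1}^{m} C(m+1,i)·a_i·b_{m+1−i} for m ≥ 1. Then for all natural numbers n ≥ k ≥ 1, C(n,k)·B(n−k, k; c) = Σ_{i=0}^{n} C(n,i)·B(i,k;a)·B(n−i,k;b), where C denotes the binomial coefficient (the summands on the right vanish unless k ≤ i ≤ n−k). -/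
open Finset BigOperators

/-- The exponential generating function of a sequence indexed from 1. -/
noncomputable def egf (a : ℕ → ℚ) : PowerSeries ℚ :=
  PowerSeries.mk fun m => if m = 0 then 0 else a m / m.factorial

lemma coeff_egf_pow (a : ℕ → ℚ) (n k : ℕ) :
    PowerSeries.coeff n (egf a ^ k) =
      ∑ g ∈ Finset.piAntidiag (Finset.Icc 1 n) k,
        if ∑ m ∈ Finset.Icc 1 n, m * g m = n then
          (Nat.multinomial (Finset.Icc 1 n) g : ℚ) *
            ∏ m ∈ Finset.Icc 1 n, (a m / m.factorial) ^ g m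
        else 0 := by
  have h1 : PowerSeries.coeff n (egf a ^ k) =
      PowerSeries.coeff n
        ((∑ m ∈ Finset.Icc 1 n,
          PowerSeries.C (a m / m.factorial) * PowerSeries.X ^ m) ^ k) := by
    rw [PowerSeries.coeff_pow, PowerSeries.coeff_pow]
    refine Finset.sum_congr rfl fun l hl => Finset.prod_congr rfl fun i hi => ?_
    have hli : l i ≤ n := by
      rw [Finset.mem_finsuppAntidiag] at hl
      rcases hl with ⟨hsum, hsupp⟩
      by_cases h : i ∈ Finset.range k
      · exact hsum ▸ Finset.single_le_sum (fun _ _ => Nat.zero_le _) h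
      · simp [Finsupp.notMem_support_iff.1 fun hs => h (hsupp hs)]
    rw [map_sum]
    simp_rw [PowerSeries.coeff_C_mul, PowerSeries.coeff_X_pow, mul_ite, mul_one, mul_zero,
      Finset.sum_ite_eq]
    simp only [egf, PowerSeries.coeff_mk, Finset.mem_Icc]
    by_cases h0 : l i = 0
    · simp [h0]
    · rw [if_neg h0, if_pos ⟨Nat.one_le_iff_ne_zero.2 h0, hli⟩]
  rw [h1, Finset.sum_pow_eq_sum_piAntidiag, map_sum]
  refine Finset.sum_congr rfl fun g hg => ?_
  have hcast : ((Nat.multinomial (Finset.Icc 1 n) g : ℕ) : PowerSeries ℚ) =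
      PowerSeries.C ((Nat.multinomial (Finset.Icc 1 n) g : ℕ) : ℚ) := by
    simp
  rw [hcast]
  simp_rw [mul_pow, ← map_pow, ← pow_mul]
  rw [Finset.prod_mul_distrib, ← map_prod, Finset.prod_pow_eq_pow_sum]
  rw [← mul_assoc, ← map_mul, PowerSeries.coeff_C_mul, PowerSeries.coeff_X_pow]
  by_cases h : ∑ m ∈ Finset.Icc 1 n, m * g m = n
  · rw [if_pos h, if_pos h.symm, mul_one]
  · rw [if_neg h, if_neg (Ne.symm h), mul_zero]

lemma Icc_one_eq_map (n : ℕ) :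
    Finset.Icc 1 n = (Finset.range n).map ⟨fun i => i + 1, add_left_injective 1⟩ := by
  ext m; simp only [Finset.mem_Icc, Finset.mem_map, Finset.mem_range,
    Function.Embedding.coeFn_mk]
  constructor
  · rintro ⟨h1, h2⟩; exact ⟨m - 1, by omega, by omega⟩
  · rintro ⟨i, hi, rfl⟩; omega

lemma Icc_one_sum {M : Type*} [AddCommMonoid M] (n : ℕ) (F : ℕ → M) :
    ∑ m ∈ Finset.Icc 1 n, F m = ∑ i : Fin n, F (i + 1) := by
  rw [Icc_one_eq_map, Finset.sum_map]
  simp only [Function.Embedding.coeFn_mk]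
  exact (Fin.sum_univ_eq_sum_range (fun x => F (x + 1)) n).symm

lemma Icc_one_prod {M : Type*} [CommMonoid M] (n : ℕ) (F : ℕ → M) :
    ∏ m ∈ Finset.Icc 1 n, F m = ∏ i : Fin n, F (i + 1) := by
  rw [Icc_one_eq_map, Finset.prod_map]
  simp only [Function.Embedding.coeFn_mk]
  exact (Fin.prod_univ_eq_prod_range (fun x => F (x + 1)) n).symm

/-- The key identity: `B(n,k;a) = n!/k! · [xⁿ] (egf a)^k`. -/
lemma partialBell_eq (a : ℕ → ℚ) (n k : ℕ) :
    partialBell a n k =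
      (n.factorial : ℚ) / (k.factorial : ℚ) * PowerSeries.coeff n (egf a ^ k) := by
  classical
  rw [coeff_egf_pow, Finset.mul_sum, partialBell]
  simp_rw [mul_ite, mul_zero]
  rw [← Finset.sum_filter, ← Finset.sum_filter]
  refine Finset.sum_bij'
    (i := fun (j : Fin n → Fin (n + 1)) (_ : j ∈ _) =>
      (fun m => if h : m ∈ Finset.Icc 1 n then
        (j ⟨m - 1, by simp only [Finset.mem_Icc] at h; omega⟩ : ℕ) else 0))
    (j := fun (g : ℕ → ℕ) (_ : g ∈ _) =>
      (fun i : Fin n => (⟨min (g (i + 1)) n, by omega⟩ : Fin (n + 1))))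
    ?_ ?_ ?_ ?_ ?_
  · -- maps into target
    rintro j hj
    simp only [Finset.mem_filter, Finset.mem_univ, true_and] at hj
    obtain ⟨hk, hn⟩ := hj
    have hval : ∀ i : Fin n,
        (if h : ((i : ℕ) + 1) ∈ Finset.Icc 1 n then
          (j ⟨(i : ℕ) + 1 - 1, by simp only [Finset.mem_Icc] at h; omega⟩ : ℕ) else 0)
          = (j i : ℕ) := by
      intro i
      rw [dif_pos (Finset.mem_Icc.2 ⟨by omega, Nat.succ_le_of_lt i.isLt⟩)]
      exact congrArg (fun t => ((j t : Fin (n+1)) : ℕ)) (Fin.ext (Nat.add_sub_cancel _ _))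
    simp only [Finset.mem_filter, Finset.mem_piAntidiag]
    refine ⟨⟨?_, ?_⟩, ?_⟩
    · rw [Icc_one_sum]; simpa only [hval] using hk
    · intro m hm
      by_contra hmem
      rw [dif_neg hmem] at hm
      exact hm rfl
    · rw [Icc_one_sum]
      calc ∑ i : Fin n, ((i : ℕ) + 1) * _ = ∑ i : Fin n, ((i : ℕ) + 1) * (j i : ℕ) :=
            Finset.sum_congr rfl fun i _ => by rw [hval]
        _ = n := hn
  · -- reverse map into source
    rintro g hg
    simp only [Finset.mem_filter, Finset.mem_piAntidiag] at hg
    obtain ⟨⟨hk, hsupp⟩, hn⟩ := hg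
    have hle : ∀ i : Fin n, g ((i : ℕ) + 1) ≤ n := by
      intro i
      have hmem : ((i : ℕ) + 1) ∈ Finset.Icc 1 n :=
        Finset.mem_Icc.2 ⟨by omega, Nat.succ_le_of_lt i.isLt⟩
      have h1 : ((i : ℕ) + 1) * g ((i : ℕ) + 1) ≤ ∑ m ∈ Finset.Icc 1 n, m * g m :=
        Finset.single_le_sum (f := fun m => m * g m) (fun m _ => Nat.zero_le _) hmem
      have h2 := Nat.le_mul_of_pos_left (g ((i : ℕ) + 1)) (show 0 < (i : ℕ) + 1 by omega)
      omega
    simp only [Finset.mem_filter, Finset.mem_univ, true_and]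
    constructor
    · calc ∑ i : Fin n, ((⟨min (g ((i : ℕ) + 1)) n, by omega⟩ : Fin (n + 1)) : ℕ)
          = ∑ i : Fin n, g ((i : ℕ) + 1) :=
            Finset.sum_congr rfl fun i _ => Nat.min_eq_left (hle i)
        _ = k := (Icc_one_sum n g).symm.trans hk
    · calc ∑ i : Fin n, ((i : ℕ) + 1) * ((⟨min (g ((i : ℕ) + 1)) n, by omega⟩ : Fin (n + 1)) : ℕ)
          = ∑ i : Fin n, ((i : ℕ) + 1) * g ((i : ℕ) + 1) :=
            Finset.sum_congr rfl fun i _ => by rw [show ((⟨min (g ((i : ℕ) + 1)) n, by omega⟩ :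
              Fin (n + 1)) : ℕ) = min (g ((i : ℕ) + 1)) n from rfl, Nat.min_eq_left (hle i)]
        _ = n := (Icc_one_sum n (fun m => m * g m)).symm.trans hn
  · -- left inverse
    rintro j hj
    funext i
    apply Fin.ext
    have h : ((i : ℕ) + 1) ∈ Finset.Icc 1 n :=
      Finset.mem_Icc.2 ⟨by omega, Nat.succ_le_of_lt i.isLt⟩
    show min (if h : _ then _ else 0) n = (j i : ℕ)
    rw [dif_pos h]
    have he : (j ⟨(i : ℕ) + 1 - 1, by simp only [Finset.mem_Icc] at h; omega⟩ : ℕ) = (j i : ℕ) :=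
      congrArg (fun t => ((j t : Fin (n+1)) : ℕ)) (Fin.ext (Nat.add_sub_cancel _ _))
    rw [he]
    exact Nat.min_eq_left (by omega : (j i : ℕ) ≤ n)
  · -- right inverse
    rintro g hg
    simp only [Finset.mem_filter, Finset.mem_piAntidiag] at hg
    obtain ⟨⟨hk, hsupp⟩, hn⟩ := hg
    funext m
    dsimp only
    by_cases hm : m ∈ Finset.Icc 1 n
    · rw [dif_pos hm]
      rw [Finset.mem_Icc] at hm
      have hm1 : m - 1 + 1 = m := by omega
      have hle : g m ≤ n := by
        have h1 : m * g m ≤ ∑ x ∈ Finset.Icc 1 n, x * g x :=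
          Finset.single_le_sum (f := fun x => x * g x) (fun x _ => Nat.zero_le _)
            (Finset.mem_Icc.2 ⟨hm.1, hm.2⟩)
        have h2 := Nat.le_mul_of_pos_left (g m) (show 0 < m by omega)
        omega
      show min (g (m - 1 + 1)) n = g m
      rw [hm1]
      exact Nat.min_eq_left hle
    · rw [dif_neg hm]
      by_contra h
      exact hm (hsupp m fun h0 => h h0.symm)
  · -- values agree
    rintro j hj
    simp only [Finset.mem_filter, Finset.mem_univ, true_and] at hj
    obtain ⟨hk, hn⟩ := hj
    have hval : ∀ i : Fin n,
        (if h : ((i : ℕ) + 1) ∈ Finset.Icc 1 n then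
          (j ⟨(i : ℕ) + 1 - 1, by simp only [Finset.mem_Icc] at h; omega⟩ : ℕ) else 0)
          = (j i : ℕ) := by
      intro i
      rw [dif_pos (Finset.mem_Icc.2 ⟨by omega, Nat.succ_le_of_lt i.isLt⟩)]
      exact congrArg (fun t => ((j t : Fin (n+1)) : ℕ)) (Fin.ext (Nat.add_sub_cancel _ _))
    have h1 : (0:ℚ) < ∏ i : Fin n, ((j i : ℕ).factorial : ℚ) :=
      Finset.prod_pos fun i _ => by exact_mod_cast Nat.factorial_pos _
    have hM : (Nat.multinomial (Finset.Icc 1 n)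
          (fun m => if h : m ∈ Finset.Icc 1 n then
            (j ⟨m - 1, by simp only [Finset.mem_Icc] at h; omega⟩ : ℕ) else 0) : ℚ)
          = (k.factorial : ℚ) / ∏ i : Fin n, ((j i : ℕ).factorial : ℚ) := by
      rw [eq_div_iff h1.ne']
      have hs := Nat.multinomial_spec (Finset.Icc 1 n)
        (fun m => if h : m ∈ Finset.Icc 1 n then
            (j ⟨m - 1, by simp only [Finset.mem_Icc] at h; omega⟩ : ℕ) else 0)
      rw [Icc_one_prod, Icc_one_sum] at hs
      simp only [hval] at hs
      rw [hk, mul_comm] at hs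
      exact_mod_cast congrArg (Nat.cast : ℕ → ℚ) hs
    rw [Icc_one_prod]
    simp only [hval]
    rw [hM]
    simp only [div_pow]
    rw [Finset.prod_div_distrib]
    rw [Nat.cast_prod]
    push_cast
    rw [Finset.prod_mul_distrib]
    have h2 : (0:ℚ) < ∏ i : Fin n, ((((i : ℕ) + 1).factorial : ℚ)) ^ (j i : ℕ) :=
      Finset.prod_pos fun i _ => pow_pos (by exact_mod_cast Nat.factorial_pos _) _
    have h3 : (0:ℚ) < (k.factorial : ℚ) := by exact_mod_cast Nat.factorial_pos k
    field_simp

lemma egf_mul (a b : ℕ → ℚ) :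
    egf a * egf b = PowerSeries.X * egf (fun m => 1 / ((m : ℚ) + 1) *
      ∑ i ∈ Finset.Icc 1 m, ((m + 1).choose i : ℚ) * a i * b (m + 1 - i)) := by
  ext d
  cases d with
  | zero =>
    simp [egf, PowerSeries.coeff_mul, Finset.Nat.antidiagonal_zero]
  | succ m =>
    rw [PowerSeries.coeff_succ_X_mul, PowerSeries.coeff_mul,
      Finset.Nat.sum_antidiagonal_eq_sum_range_succ_mk]
    simp only [egf, PowerSeries.coeff_mk]
    have hsub : Finset.Icc 1 m ⊆ Finset.range (m + 1 + 1) := by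
      intro x hx; rw [Finset.mem_Icc] at hx; rw [Finset.mem_range]; omega
    rw [← Finset.sum_subset hsub (by
      intro x hx hnx
      rw [Finset.mem_range] at hx
      rw [Finset.mem_Icc] at hnx
      by_cases hx0 : x = 0
      · rw [if_pos hx0, zero_mul]
      · have : m + 1 - x = 0 := by omega
        rw [this, if_pos rfl, mul_zero])]
    by_cases hm : m = 0
    · subst hm; simp
    · rw [if_neg hm, Finset.mul_sum, Finset.sum_div]
      refine Finset.sum_congr rfl fun x hx => ?_
      rw [Finset.mem_Icc] at hx
      rw [if_neg (by omega), if_neg (by omega)]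
      have hch : ((m + 1).choose x : ℚ) * (x.factorial : ℚ) * ((m + 1 - x).factorial : ℚ)
          = ((m + 1).factorial : ℚ) := by
        exact_mod_cast Nat.choose_mul_factorial_mul_factorial (by omega : x ≤ m + 1)
      have hx0 : (x.factorial : ℚ) ≠ 0 := by exact_mod_cast (Nat.factorial_pos x).ne'
      have hx1 : ((m + 1 - x).factorial : ℚ) ≠ 0 := by
        exact_mod_cast (Nat.factorial_pos (m + 1 - x)).ne'
      have hm1 : (m.factorial : ℚ) ≠ 0 := by exact_mod_cast (Nat.factorial_pos m).ne'
      have hmm : ((m : ℚ) + 1) ≠ 0 := by positivity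
      have hfs : ((m + 1).factorial : ℚ) = ((m : ℚ) + 1) * (m.factorial : ℚ) := by
        rw [Nat.factorial_succ]; push_cast; ring
      field_simp
      rw [hfs] at hch
      linear_combination (- a x * b (m + 1 - x)) * hch

/-- Convolution formula for the partial Bell polynomials: with
`c_m = (1/(m+1))·Σ_{i=1}^{m} C(m+1,i)·a_i·b_{m+1−i}`, one has
`C(n,k)·B(n−k,k;c) = Σ_{i=0}^{n} C(n,i)·B(i,k;a)·B(n−i,k;b)` for `n ≥ k ≥ 1`. -/
theorem partialBell_convolution (a b : ℕ → ℚ) (ha : a 1 = 1) (hb : b 1 = 1)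
    (n k : ℕ) (hk : 1 ≤ k) (hkn : k ≤ n) :
    (n.choose k : ℚ) *
        partialBell
          (fun m => 1 / ((m : ℚ) + 1) *
            ∑ i ∈ Finset.Icc 1 m, ((m + 1).choose i : ℚ) * a i * b (m + 1 - i))
          (n - k) k =
      ∑ i ∈ Finset.range (n + 1),
        (n.choose i : ℚ) * partialBell a i k * partialBell b (n - i) k := by
  simp_rw [partialBell_eq]
  have hab : PowerSeries.coeff n ((egf a) ^ k * (egf b) ^ k)
      = PowerSeries.coeff (n - k) (egf (fun m => 1 / ((m : ℚ) + 1) *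
        ∑ i ∈ Finset.Icc 1 m, ((m + 1).choose i : ℚ) * a i * b (m + 1 - i)) ^ k) := by
    rw [← mul_pow, egf_mul a b, mul_pow, PowerSeries.coeff_X_pow_mul', if_pos hkn]
  have hsum : PowerSeries.coeff n ((egf a) ^ k * (egf b) ^ k)
      = ∑ i ∈ Finset.range (n + 1),
          PowerSeries.coeff i (egf a ^ k) * PowerSeries.coeff (n - i) (egf b ^ k) := by
    rw [PowerSeries.coeff_mul, Finset.Nat.sum_antidiagonal_eq_sum_range_succ_mk]
  have hkf : (k.factorial : ℚ) ≠ 0 := by exact_mod_cast (Nat.factorial_pos k).ne'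
  have h1 : ∀ i ∈ Finset.range (n + 1),
      (n.choose i : ℚ) * ((i.factorial : ℚ) / k.factorial * PowerSeries.coeff i (egf a ^ k))
        * (((n - i).factorial : ℚ) / k.factorial * PowerSeries.coeff (n - i) (egf b ^ k))
      = (n.factorial : ℚ) / ((k.factorial : ℚ) * k.factorial)
        * (PowerSeries.coeff i (egf a ^ k) * PowerSeries.coeff (n - i) (egf b ^ k)) := by
    intro i hi
    have hcf : ((n.choose i : ℚ)) * i.factorial * (n - i).factorial = n.factorial := by
      exact_mod_cast Nat.choose_mul_factorial_mul_factorial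
        (Nat.lt_succ_iff.mp (Finset.mem_range.1 hi))
    calc (n.choose i : ℚ) * ((i.factorial : ℚ) / k.factorial
            * PowerSeries.coeff i (egf a ^ k))
          * (((n - i).factorial : ℚ) / k.factorial * PowerSeries.coeff (n - i) (egf b ^ k))
        = ((n.choose i : ℚ) * i.factorial * (n - i).factorial)
            / ((k.factorial : ℚ) * k.factorial)
          * (PowerSeries.coeff i (egf a ^ k) * PowerSeries.coeff (n - i) (egf b ^ k)) := by
          ring
      _ = _ := by rw [hcf]
  rw [Finset.sum_congr rfl h1, ← Finset.mul_sum, ← hsum, hab]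
  have h2 : ((n.choose k : ℚ)) * (n - k).factorial * k.factorial = n.factorial := by
    have := Nat.choose_mul_factorial_mul_factorial hkn
    push_cast [← this]
    ring
  have h3 : (n.choose k : ℚ) * (((n - k).factorial : ℚ) / k.factorial)
      = (n.factorial : ℚ) / ((k.factorial : ℚ) * k.factorial) := by
    field_simp
    linear_combination h2
  rw [← mul_assoc, h3]
end

section
/- Recurrence of Cvijović type: let a : ℕ → ℚ be a sequence indexed from 1 with a_1 = 1. Then for all natural numbers n > k ≥ 1, B(n,k;a) = (1/(n−k))·Σ_{i=1}^{n−k} C(n,i)·((k+1) − (n+1)/(i+1))·a_{i+1}·B(n−i, k; a), where C denotes the binomial coefficient. -/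
open Finset BigOperators

namespace PBaux

/-- denominator -/
def D (N : ℕ) (j : Fin N → ℕ) : ℕ := ∏ i, (j i).factorial * ((i.1 + 1).factorial) ^ (j i)

def A (a : ℕ → ℚ) (N : ℕ) (j : Fin N → ℕ) : ℚ := ∏ i, a (i.1 + 1) ^ (j i)

/-- padded Bell sum -/
noncomputable def S (a : ℕ → ℚ) (N V m l : ℕ) : ℚ :=
  ∑ j ∈ Fintype.piFinset (fun _ : Fin N => Finset.range V),
    if (∑ i, j i) = l ∧ (∑ i, (i.1 + 1) * j i) = m then
      (m.factorial : ℚ) / (D N j : ℚ) * A a N j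
    else 0

lemma D_pos (N : ℕ) (j : Fin N → ℕ) : 0 < D N j :=
  Finset.prod_pos fun i _ =>
    Nat.mul_pos (Nat.factorial_pos _) (pow_pos (Nat.factorial_pos _) _)

lemma prod_update {β : Type*} [CommMonoid β] {N : ℕ} (f : Fin N → ℕ → β)
    (j : Fin N → ℕ) (t : Fin N) (v : ℕ) :
    ∏ x, f x (Function.update j t v x) = (∏ x ∈ Finset.univ.erase t, f x (j x)) * f t v := by
  rw [← Finset.prod_erase_mul _ _ (Finset.mem_univ t)]
  congr 1
  · exact Finset.prod_congr rfl fun x hx => by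
      rw [Function.update_of_ne (Finset.ne_of_mem_erase hx)]
  · rw [Function.update_self]

lemma sum_update {β : Type*} [AddCommMonoid β] {N : ℕ} (f : Fin N → ℕ → β)
    (j : Fin N → ℕ) (t : Fin N) (v : ℕ) :
    ∑ x, f x (Function.update j t v x) = (∑ x ∈ Finset.univ.erase t, f x (j x)) + f t v := by
  rw [← Finset.sum_erase_add _ _ (Finset.mem_univ t)]
  congr 1
  · exact Finset.sum_congr rfl fun x hx => by
      rw [Function.update_of_ne (Finset.ne_of_mem_erase hx)]
  · rw [Function.update_self]

lemma prod_extend {β : Type*} [CommMonoid β] {m N : ℕ} (hN : m ≤ N) (f : ℕ → ℕ → β)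
    (hf : ∀ i, f i 0 = 1) (j : Fin m → ℕ) :
    (∏ i : Fin N, f i.1 (if h : i.1 < m then j ⟨i.1, h⟩ else 0)) = ∏ x : Fin m, f x.1 (j x) := by
  have h1 : (∏ i : Fin N, f i.1 (if h : i.1 < m then j ⟨i.1, h⟩ else 0))
      = ∏ i ∈ Finset.range N, f i (if h : i < m then j ⟨i, h⟩ else 0) :=
    Fin.prod_univ_eq_prod_range (fun i => f i (if h : i < m then j ⟨i, h⟩ else 0)) N
  have h2 : (∏ x : Fin m, f x.1 (j x))
      = ∏ i ∈ Finset.range m, f i (if h : i < m then j ⟨i, h⟩ else 0) := by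
    rw [← Fin.prod_univ_eq_prod_range (fun i => f i (if h : i < m then j ⟨i, h⟩ else 0)) m]
    exact Finset.prod_congr rfl fun x _ => by rw [dif_pos x.2]
  rw [h1, h2]
  refine (Finset.prod_subset (Finset.range_subset_range.2 hN) fun i _ hi => ?_).symm
  rw [Finset.mem_range, not_lt] at hi
  rw [dif_neg (by omega), hf]

lemma sum_extend {β : Type*} [AddCommMonoid β] {m N : ℕ} (hN : m ≤ N) (f : ℕ → ℕ → β)
    (hf : ∀ i, f i 0 = 0) (j : Fin m → ℕ) :
    (∑ i : Fin N, f i.1 (if h : i.1 < m then j ⟨i.1, h⟩ else 0)) = ∑ x : Fin m, f x.1 (j x) := by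
  have h1 : (∑ i : Fin N, f i.1 (if h : i.1 < m then j ⟨i.1, h⟩ else 0))
      = ∑ i ∈ Finset.range N, f i (if h : i < m then j ⟨i, h⟩ else 0) :=
    Fin.sum_univ_eq_sum_range (fun i => f i (if h : i < m then j ⟨i, h⟩ else 0)) N
  have h2 : (∑ x : Fin m, f x.1 (j x))
      = ∑ i ∈ Finset.range m, f i (if h : i < m then j ⟨i, h⟩ else 0) := by
    rw [← Fin.sum_univ_eq_sum_range (fun i => f i (if h : i < m then j ⟨i, h⟩ else 0)) m]
    exact Finset.sum_congr rfl fun x _ => by rw [dif_pos x.2]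
  rw [h1, h2]
  refine (Finset.sum_subset (Finset.range_subset_range.2 hN) fun i _ hi => ?_).symm
  rw [Finset.mem_range, not_lt] at hi
  rw [dif_neg (by omega), hf]

lemma conv (a : ℕ → ℚ) (N V m l : ℕ) (hN : m ≤ N) (hV : m < V) :
    partialBell a m l = S a N V m l := by
  classical
  unfold partialBell S D A
  rw [← Finset.sum_filter, ← Finset.sum_filter]
  have hV1 : 0 < V := Nat.lt_of_le_of_lt (Nat.zero_le m) hV
  set φ : (Fin m → Fin (m + 1)) → (Fin N → ℕ) :=
    fun j x => if h : x.1 < m then (j ⟨x.1, h⟩ : ℕ) else 0 with hφ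
  set ψ : (Fin N → ℕ) → (Fin m → Fin (m + 1)) :=
    fun j x => (⟨min (j ⟨x.1, lt_of_lt_of_le x.2 hN⟩) m,
      Nat.lt_succ_of_le (Nat.min_le_right _ _)⟩ : Fin (m + 1)) with hψ
  have hsum : ∀ j : Fin m → Fin (m + 1), ∑ x : Fin N, φ j x = ∑ x : Fin m, (j x : ℕ) :=
    fun j => sum_extend hN (fun _ v => v) (fun _ => rfl) (fun x => (j x : ℕ))
  have hwsum : ∀ j : Fin m → Fin (m + 1),
      ∑ x : Fin N, (x.1 + 1) * φ j x = ∑ x : Fin m, (x.1 + 1) * (j x : ℕ) :=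
    fun j => sum_extend hN (fun i v => (i + 1) * v) (fun _ => by simp) (fun x => (j x : ℕ))
  have hDeq : ∀ j : Fin m → Fin (m + 1),
      ∏ x : Fin N, (φ j x).factorial * ((x.1 + 1).factorial) ^ (φ j x)
        = ∏ x : Fin m, ((j x : ℕ)).factorial * ((x.1 + 1).factorial) ^ (j x : ℕ) :=
    fun j => prod_extend hN (fun i v => v.factorial * ((i + 1).factorial) ^ v)
      (fun _ => by simp) (fun x => (j x : ℕ))
  have hAeq : ∀ j : Fin m → Fin (m + 1),
      ∏ x : Fin N, a (x.1 + 1) ^ (φ j x) = ∏ x : Fin m, a (x.1 + 1) ^ (j x : ℕ) :=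
    fun j => prod_extend hN (fun i v => a (i + 1) ^ v) (fun _ => by simp) (fun x => (j x : ℕ))
  refine Finset.sum_nbij' φ ψ ?_ ?_ ?_ ?_ ?_
  · intro j hj
    rw [Finset.mem_filter] at hj ⊢
    refine ⟨Fintype.mem_piFinset.2 fun x => ?_, ?_⟩
    · rw [Finset.mem_range, hφ]
      dsimp only
      split
      · exact lt_of_le_of_lt (Nat.lt_succ_iff.mp (Fin.is_lt _)) hV
      · exact hV1
    · rw [hsum, hwsum]; exact hj.2
  · intro j hj
    rw [Finset.mem_filter] at hj
    have hle : ∀ x : Fin N, (x.1 + 1) * j x ≤ m := by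
      intro x
      rw [← hj.2.2]
      exact Finset.single_le_sum (f := fun x : Fin N => (x.1 + 1) * j x)
        (fun _ _ => Nat.zero_le _) (Finset.mem_univ x)
    have hinv : φ (ψ j) = j := by
      funext x
      rw [hφ]
      dsimp only
      split
      · rename_i h
        show j x ⊓ m = j x
        exact min_eq_left
          (le_trans (Nat.le_mul_of_pos_left _ (Nat.succ_pos _)) (hle x))
      · rename_i h
        by_contra hc
        have h1 : 1 ≤ j x := Nat.one_le_iff_ne_zero.2 fun h0 => hc h0.symm
        have := hle x
        nlinarith
    rw [Finset.mem_filter]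
    refine ⟨Finset.mem_univ _, ?_, ?_⟩
    · have := hsum (ψ j); rw [hinv] at this; rw [← this]; exact hj.2.1
    · have := hwsum (ψ j); rw [hinv] at this; rw [← this]; exact hj.2.2
  · intro j _
    funext x
    rw [hψ, hφ]
    dsimp only
    simp only [dif_pos x.2]
    exact Fin.ext (by simpa using Nat.lt_succ_iff.mp (Fin.is_lt (j x)))
  · intro j hj
    rw [Finset.mem_filter] at hj
    have hle : ∀ x : Fin N, (x.1 + 1) * j x ≤ m := by
      intro x
      rw [← hj.2.2]
      exact Finset.single_le_sum (f := fun x : Fin N => (x.1 + 1) * j x)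
        (fun _ _ => Nat.zero_le _) (Finset.mem_univ x)
    funext x
    rw [hφ]
    dsimp only
    split
    · rename_i h
      show ((⟨j x ⊓ m, Nat.lt_succ_of_le (Nat.min_le_right _ _)⟩ : Fin (m+1)) : ℕ) = j x
      exact min_eq_left
        (le_trans (Nat.le_mul_of_pos_left _ (Nat.succ_pos _)) (hle x))
    · rename_i h
      by_contra hc
      have h1 : 1 ≤ j x := Nat.one_le_iff_ne_zero.2 fun h0 => hc h0.symm
      have := hle x
      nlinarith
  · intro j _
    rw [hDeq, hAeq]

lemma bump (a : ℕ → ℚ) (N V m l M : ℕ) (t : Fin N) (hM : m + t.1 + 1 = M) (hV : M < V) :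
    a (t.1 + 1) * S a N V m l =
      ∑ j ∈ Fintype.piFinset (fun _ : Fin N => Finset.range V),
        if (∑ i, j i) = l + 1 ∧ (∑ i, (i.1 + 1) * j i) = M then
          (j t : ℚ) * ((t.1 + 1).factorial : ℚ) * (m.factorial : ℚ) / (D N j : ℚ) * A a N j
        else 0 := by
  classical
  unfold S
  rw [Finset.mul_sum]
  simp_rw [mul_ite, mul_zero]
  rw [← Finset.sum_filter, ← Finset.sum_filter]
  set JJ := Fintype.piFinset (fun _ : Fin N => Finset.range V) with hJJ
  set G : (Fin N → ℕ) → ℚ := fun j =>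
    (j t : ℚ) * ((t.1 + 1).factorial : ℚ) * (m.factorial : ℚ) / (D N j : ℚ) * A a N j with hG
  have hres : ∑ j ∈ JJ.filter (fun j => (∑ i, j i) = l + 1 ∧ (∑ i, (i.1 + 1) * j i) = M), G j
      = ∑ j ∈ JJ.filter
          (fun j => ((∑ i, j i) = l + 1 ∧ (∑ i, (i.1 + 1) * j i) = M) ∧ j t ≠ 0), G j := by
    refine (Finset.sum_subset ?_ ?_).symm
    · intro j hj
      rw [Finset.mem_filter] at hj ⊢
      exact ⟨hj.1, hj.2.1⟩
    · intro j hj hj2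
      rw [Finset.mem_filter] at hj hj2
      have h0 : j t = 0 := by
        by_contra hc
        exact hj2 ⟨hj.1, hj.2, hc⟩
      rw [hG]
      dsimp only
      rw [h0]
      simp
  rw [hres]
  set φ : (Fin N → ℕ) → (Fin N → ℕ) := fun j => Function.update j t (j t + 1) with hφ
  set ψ : (Fin N → ℕ) → (Fin N → ℕ) := fun j => Function.update j t (j t - 1) with hψ
  refine Finset.sum_nbij' φ ψ ?_ ?_ ?_ ?_ ?_
  · intro j hj
    rw [Finset.mem_filter, hJJ, Fintype.mem_piFinset] at hj ⊢
    have hjt : j t ≤ m := by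
      have h1 : (t.1 + 1) * j t ≤ m := by
        rw [← hj.2.2]
        exact Finset.single_le_sum (f := fun x : Fin N => (x.1 + 1) * j x)
          (fun _ _ => Nat.zero_le _) (Finset.mem_univ t)
      exact le_trans (Nat.le_mul_of_pos_left _ (Nat.succ_pos _)) h1
    have hs : ∑ x, φ j x = (∑ x ∈ Finset.univ.erase t, j x) + (j t + 1) :=
      sum_update (fun _ v => v) j t (j t + 1)
    have hs0 : ∑ x, j x = (∑ x ∈ Finset.univ.erase t, j x) + j t :=
      (Finset.sum_erase_add _ _ (Finset.mem_univ t)).symm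
    have hw : ∑ x, (x.1 + 1) * φ j x
        = (∑ x ∈ Finset.univ.erase t, (x.1 + 1) * j x) + (t.1 + 1) * (j t + 1) :=
      sum_update (fun x v => (x.1 + 1) * v) j t (j t + 1)
    have hw0 : ∑ x, (x.1 + 1) * j x
        = (∑ x ∈ Finset.univ.erase t, (x.1 + 1) * j x) + (t.1 + 1) * j t :=
      (Finset.sum_erase_add _ _ (Finset.mem_univ t)).symm
    refine ⟨fun x => ?_, ⟨?_, ?_⟩, ?_⟩
    · rw [Finset.mem_range]
      by_cases hx : x = t
      · subst hx
        rw [hφ]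
        dsimp only
        rw [Function.update_self]
        omega
      · rw [hφ]
        dsimp only
        rw [Function.update_of_ne hx]
        have := hj.1 x
        rwa [Finset.mem_range] at this
    · have := hj.2.1
      omega
    · have := hj.2.2
      have hexp : (t.1 + 1) * (j t + 1) = (t.1 + 1) * j t + (t.1 + 1) := by ring
      omega
    · rw [hφ]
      dsimp only
      rw [Function.update_self]
      omega
  · intro j hj
    rw [Finset.mem_filter, hJJ, Fintype.mem_piFinset] at hj ⊢
    have hjt : 1 ≤ j t := Nat.one_le_iff_ne_zero.2 hj.2.2
    have hs : ∑ x, ψ j x = (∑ x ∈ Finset.univ.erase t, j x) + (j t - 1) :=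
      sum_update (fun _ v => v) j t (j t - 1)
    have hs0 : ∑ x, j x = (∑ x ∈ Finset.univ.erase t, j x) + j t :=
      (Finset.sum_erase_add _ _ (Finset.mem_univ t)).symm
    have hw : ∑ x, (x.1 + 1) * ψ j x
        = (∑ x ∈ Finset.univ.erase t, (x.1 + 1) * j x) + (t.1 + 1) * (j t - 1) :=
      sum_update (fun x v => (x.1 + 1) * v) j t (j t - 1)
    have hw0 : ∑ x, (x.1 + 1) * j x
        = (∑ x ∈ Finset.univ.erase t, (x.1 + 1) * j x) + (t.1 + 1) * j t :=
      (Finset.sum_erase_add _ _ (Finset.mem_univ t)).symm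
    refine ⟨fun x => ?_, ?_, ?_⟩
    · rw [Finset.mem_range]
      have hx := hj.1 x
      rw [Finset.mem_range] at hx
      by_cases hxt : x = t
      · subst hxt
        rw [hψ]
        dsimp only
        rw [Function.update_self]
        omega
      · rw [hψ]
        dsimp only
        rwa [Function.update_of_ne hxt]
    · have := hj.2.1.1
      omega
    · have h2 := hj.2.1.2
      have h3 : (t.1 + 1) * (j t - 1) + (t.1 + 1) = (t.1 + 1) * j t := by
        obtain ⟨c, hc⟩ := Nat.exists_eq_add_of_le hjt
        rw [hc, Nat.add_sub_cancel_left]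
        ring
      omega
  · intro j _
    rw [hψ, hφ]
    dsimp only
    rw [Function.update_idem, Function.update_self, Nat.add_sub_cancel,
      Function.update_eq_self]
  · intro j hj
    rw [Finset.mem_filter] at hj
    have hjt : 1 ≤ j t := Nat.one_le_iff_ne_zero.2 hj.2.2
    rw [hφ, hψ]
    dsimp only
    rw [Function.update_idem, Function.update_self, Nat.sub_add_cancel hjt,
      Function.update_eq_self]
  · intro j hj
    rw [Finset.mem_filter] at hj
    have hDφ : D N (φ j) = D N j * ((j t + 1) * (t.1 + 1).factorial) := by
      unfold D
      rw [hφ]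
      dsimp only
      rw [prod_update (fun x v => v.factorial * ((x.1 + 1).factorial) ^ v) j t (j t + 1),
        ← Finset.prod_erase_mul _ _ (Finset.mem_univ t), Nat.factorial_succ, pow_succ]
      ring
    have hAφ : A a N (φ j) = A a N j * a (t.1 + 1) := by
      unfold A
      rw [hφ]
      dsimp only
      rw [prod_update (fun x v => a (x.1 + 1) ^ v) j t (j t + 1),
        ← Finset.prod_erase_mul _ _ (Finset.mem_univ t), pow_succ]
      ring
    have hD0 : ((D N j : ℕ) : ℚ) ≠ 0 := Nat.cast_ne_zero.2 (D_pos N j).ne'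
    have hjt1 : ((j t : ℕ) : ℚ) + 1 ≠ 0 := by positivity
    have hf0 : (((t.1 + 1).factorial : ℕ) : ℚ) ≠ 0 :=
      Nat.cast_ne_zero.2 (Nat.factorial_pos _).ne'
    rw [hG]
    dsimp only
    rw [hDφ, hAφ]
    have hφt : φ j t = j t + 1 := Function.update_self _ _ _
    rw [hφt]
    push_cast
    field_simp

lemma scalar (n k : ℕ) (hk : 1 ≤ k) (hkn : k < n) (j : Fin (n + 1) → ℕ)
    (h1 : ∑ i, j i = k + 1) (h2 : ∑ i, (i.1 + 1) * j i = n + 1) :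
    ∑ i ∈ Finset.Icc 1 (n - k),
        ((n.choose i : ℚ) * (((k : ℚ) + 1) - ((n : ℚ) + 1) / ((i : ℚ) + 1))) *
          ((j ⟨min i n, Nat.lt_succ_of_le (Nat.min_le_right i n)⟩ : ℚ) * ((i + 1).factorial : ℚ) *
            ((n - i).factorial : ℚ))
      = ((n - k : ℕ) : ℚ) * (j 0 : ℚ) * (n.factorial : ℚ) := by
  classical
  set g : ℕ → ℕ := fun i => if h : i < n + 1 then j ⟨i, h⟩ else 0 with hg
  have hgj : ∀ x : Fin (n + 1), g x.1 = j x := fun x => by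
    rw [hg]; dsimp only; rw [dif_pos x.2]
  have hg0 : ∑ i ∈ Finset.range (n + 1), g i = k + 1 := by
    rw [← Fin.sum_univ_eq_sum_range g (n + 1), Finset.sum_congr rfl fun x _ => hgj x]
    exact h1
  have hg1 : ∑ i ∈ Finset.range (n + 1), (i + 1) * g i = n + 1 := by
    rw [← Fin.sum_univ_eq_sum_range (fun i => (i + 1) * g i) (n + 1),
      Finset.sum_congr rfl fun x _ => by rw [hgj x]]
    exact h2
  have hg2 : ∑ i ∈ Finset.range (n + 1), i * g i = n - k := by
    have hsplit : ∑ i ∈ Finset.range (n + 1), (i + 1) * g i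
        = (∑ i ∈ Finset.range (n + 1), i * g i) + ∑ i ∈ Finset.range (n + 1), g i := by
      rw [← Finset.sum_add_distrib]
      exact Finset.sum_congr rfl fun i _ => by ring
    omega
  have hvan : ∀ i, n - k < i → g i = 0 := by
    intro i hi
    by_cases hin : i < n + 1
    · have hle : i * g i ≤ n - k := by
        rw [← hg2]
        exact Finset.single_le_sum (f := fun i => i * g i) (fun _ _ => Nat.zero_le _)
          (Finset.mem_range.2 hin)
      by_contra hc
      have h1' : 1 ≤ g i := Nat.one_le_iff_ne_zero.2 hc
      nlinarith
    · rw [hg]; dsimp only; rw [dif_neg hin]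
  have hIcc1 : ∑ i ∈ Finset.Icc 1 (n - k), i * g i = n - k := by
    rw [← hg2]
    refine Finset.sum_subset (fun i hi => ?_) (fun i hi hni => ?_)
    · rw [Finset.mem_Icc] at hi; rw [Finset.mem_range]; omega
    · rw [Finset.mem_range] at hi
      rw [Finset.mem_Icc] at hni
      by_cases h0 : i = 0
      · rw [h0]; ring
      · rw [hvan i (by omega)]; ring
  have h01 : (0 : ℕ) ∉ Finset.Icc 1 (n - k) := by simp
  have hIcc0 : g 0 + ∑ i ∈ Finset.Icc 1 (n - k), g i = k + 1 := by
    rw [← hg0, ← Finset.sum_insert h01]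
    refine Finset.sum_subset (fun i hi => ?_) (fun i hi hni => ?_)
    · simp only [Finset.mem_insert, Finset.mem_Icc] at hi
      rw [Finset.mem_range]; omega
    · simp only [Finset.mem_insert, Finset.mem_Icc] at hni
      exact hvan i (by omega)
  have hterm : ∀ i ∈ Finset.Icc 1 (n - k),
      ((n.choose i : ℚ) * (((k : ℚ) + 1) - ((n : ℚ) + 1) / ((i : ℚ) + 1))) *
          ((j ⟨min i n, Nat.lt_succ_of_le (Nat.min_le_right i n)⟩ : ℚ) *
            ((i + 1).factorial : ℚ) * ((n - i).factorial : ℚ))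
        = ((((k : ℚ) + 1) * ((i : ℚ) * (g i : ℚ)) - ((n : ℚ) - (k : ℚ)) * (g i : ℚ)))
            * (n.factorial : ℚ) := by
    intro i hi
    rw [Finset.mem_Icc] at hi
    have hin : i ≤ n := by omega
    have hjg : (j ⟨min i n, Nat.lt_succ_of_le (Nat.min_le_right i n)⟩ : ℕ) = g i := by
      have hmin : min i n = i := min_eq_left hin
      rw [hg]
      dsimp only
      rw [dif_pos (by omega : i < n + 1)]
      congr 1
      exact Fin.ext hmin
    have hcf : (n.choose i : ℚ) * (i.factorial : ℚ) * ((n - i).factorial : ℚ)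
        = (n.factorial : ℚ) := by
      exact_mod_cast congrArg (Nat.cast : ℕ → ℚ)
        (Nat.choose_mul_factorial_mul_factorial hin)
    have hfs : (((i + 1).factorial : ℕ) : ℚ) = ((i : ℚ) + 1) * (i.factorial : ℚ) := by
      rw [Nat.factorial_succ]; push_cast; ring
    have hi0 : ((i : ℚ) + 1) ≠ 0 := by positivity
    rw [hjg, hfs]
    calc (n.choose i : ℚ) * (((k : ℚ) + 1) - ((n : ℚ) + 1) / ((i : ℚ) + 1)) *
          ((g i : ℚ) * (((i : ℚ) + 1) * (i.factorial : ℚ)) * ((n - i).factorial : ℚ))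
        = ((((k : ℚ) + 1) - ((n : ℚ) + 1) / ((i : ℚ) + 1)) * ((i : ℚ) + 1)) *
            ((g i : ℚ) * ((n.choose i : ℚ) * (i.factorial : ℚ) * ((n - i).factorial : ℚ))) := by
          ring
      _ = ((((k : ℚ) + 1) * ((i : ℚ) + 1) - ((n : ℚ) + 1))) *
            ((g i : ℚ) * (n.factorial : ℚ)) := by
          rw [sub_mul, div_mul_cancel₀ _ hi0, hcf]
      _ = ((((k : ℚ) + 1) * ((i : ℚ) * (g i : ℚ)) - ((n : ℚ) - (k : ℚ)) * (g i : ℚ)))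
            * (n.factorial : ℚ) := by ring
  rw [Finset.sum_congr rfl hterm, ← Finset.sum_mul]
  have c1 : (∑ i ∈ Finset.Icc 1 (n - k), (i : ℚ) * (g i : ℚ)) = (n : ℚ) - (k : ℚ) := by
    have hc := congrArg (Nat.cast : ℕ → ℚ) hIcc1
    push_cast [Nat.cast_sub hkn.le] at hc
    exact hc
  have c0 : (∑ i ∈ Finset.Icc 1 (n - k), (g i : ℚ)) = (k : ℚ) + 1 - (g 0 : ℚ) := by
    have hc := congrArg (Nat.cast : ℕ → ℚ) hIcc0
    push_cast at hc
    linarith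
  have hj0 : (j 0 : ℚ) = (g 0 : ℚ) := by
    have := hgj 0
    rw [Fin.val_zero] at this
    rw [this]
  rw [Finset.sum_sub_distrib, ← Finset.mul_sum, ← Finset.mul_sum, c1, c0,
    Nat.cast_sub hkn.le, hj0]
  ring

end PBaux

/-- Cvijović-type recurrence: for `n > k ≥ 1` and `a_1 = 1`,
`B(n,k;a) = (1/(n−k))·Σ_{i=1}^{n−k} C(n,i)·((k+1) − (n+1)/(i+1))·a_{i+1}·B(n−i,k;a)`. -/
theorem partialBell_recurrence (a : ℕ → ℚ) (ha : a 1 = 1) (n k : ℕ)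
    (hk : 1 ≤ k) (hkn : k < n) :
    partialBell a n k =
      1 / ((n : ℚ) - (k : ℚ)) *
        ∑ i ∈ Finset.Icc 1 (n - k),
          (n.choose i : ℚ) * (((k : ℚ) + 1) - ((n : ℚ) + 1) / ((i : ℚ) + 1)) * a (i + 1) *
            partialBell a (n - i) k := by
  classical
  have hkn' : (k : ℚ) < (n : ℚ) := by exact_mod_cast hkn
  have hne : (n : ℚ) - (k : ℚ) ≠ 0 := by linarith
  set JJ := Fintype.piFinset (fun _ : Fin (n + 1) => Finset.range (n + 2)) with hJJ
  have hsummand : ∀ i ∈ Finset.Icc 1 (n - k),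
      (n.choose i : ℚ) * (((k : ℚ) + 1) - ((n : ℚ) + 1) / ((i : ℚ) + 1)) * a (i + 1) *
          partialBell a (n - i) k
        = ∑ j ∈ JJ,
            if (∑ x, j x) = k + 1 ∧ (∑ x, (x.1 + 1) * j x) = n + 1 then
              ((n.choose i : ℚ) * (((k : ℚ) + 1) - ((n : ℚ) + 1) / ((i : ℚ) + 1))) *
                ((j ⟨min i n, Nat.lt_succ_of_le (Nat.min_le_right i n)⟩ : ℚ) *
                  ((i + 1).factorial : ℚ) * ((n - i).factorial : ℚ) / (PBaux.D (n + 1) j : ℚ)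
                  * PBaux.A a (n + 1) j)
            else 0 := by
    intro i hi
    rw [Finset.mem_Icc] at hi
    have hin : i ≤ n := by omega
    set t : Fin (n + 1) := ⟨min i n, Nat.lt_succ_of_le (Nat.min_le_right i n)⟩ with ht
    have ht1 : t.1 = i := min_eq_left hin
    have hconv : partialBell a (n - i) k = PBaux.S a (n + 1) (n + 2) (n - i) k :=
      PBaux.conv a _ _ _ _ (by omega) (by omega)
    have hb := PBaux.bump a (n + 1) (n + 2) (n - i) k (n + 1) t
      (by rw [ht1]; omega) (by omega)
    rw [ht1] at hb
    rw [hconv, mul_assoc, hb, Finset.mul_sum]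
    exact Finset.sum_congr rfl fun j _ => by rw [mul_ite, mul_zero]
  rw [Finset.sum_congr rfl hsummand, Finset.sum_comm]
  have hLHS : partialBell a n k
      = ∑ j ∈ JJ,
          if (∑ x, j x) = k + 1 ∧ (∑ x, (x.1 + 1) * j x) = n + 1 then
            (j 0 : ℚ) * ((Nat.factorial 1 : ℕ) : ℚ) * (n.factorial : ℚ)
              / (PBaux.D (n + 1) j : ℚ) * PBaux.A a (n + 1) j
          else 0 := by
    have hb := PBaux.bump a (n + 1) (n + 2) n k (n + 1) (0 : Fin (n + 1))
      (by simp) (by omega)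
    simp only [Fin.val_zero, Nat.zero_add, ha, one_mul] at hb
    rw [PBaux.conv a (n + 1) (n + 2) n k (by omega) (by omega), hb]
  rw [hLHS]
  have hper : ∀ j ∈ JJ,
      (∑ i ∈ Finset.Icc 1 (n - k),
          if (∑ x, j x) = k + 1 ∧ (∑ x, (x.1 + 1) * j x) = n + 1 then
            ((n.choose i : ℚ) * (((k : ℚ) + 1) - ((n : ℚ) + 1) / ((i : ℚ) + 1))) *
              ((j ⟨min i n, Nat.lt_succ_of_le (Nat.min_le_right i n)⟩ : ℚ) *
                ((i + 1).factorial : ℚ) * ((n - i).factorial : ℚ) / (PBaux.D (n + 1) j : ℚ)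
                * PBaux.A a (n + 1) j)
          else 0)
        = ((n : ℚ) - (k : ℚ)) *
            (if (∑ x, j x) = k + 1 ∧ (∑ x, (x.1 + 1) * j x) = n + 1 then
              (j 0 : ℚ) * ((Nat.factorial 1 : ℕ) : ℚ) * (n.factorial : ℚ)
                / (PBaux.D (n + 1) j : ℚ) * PBaux.A a (n + 1) j
            else 0) := by
    intro j _
    by_cases hQ : (∑ x, j x) = k + 1 ∧ (∑ x, (x.1 + 1) * j x) = n + 1
    · simp only [if_pos hQ]
      have step1 : (∑ i ∈ Finset.Icc 1 (n - k),
            ((n.choose i : ℚ) * (((k : ℚ) + 1) - ((n : ℚ) + 1) / ((i : ℚ) + 1))) *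
              ((j ⟨min i n, Nat.lt_succ_of_le (Nat.min_le_right i n)⟩ : ℚ) *
                ((i + 1).factorial : ℚ) * ((n - i).factorial : ℚ) / (PBaux.D (n + 1) j : ℚ)
                * PBaux.A a (n + 1) j))
          = (∑ i ∈ Finset.Icc 1 (n - k),
              ((n.choose i : ℚ) * (((k : ℚ) + 1) - ((n : ℚ) + 1) / ((i : ℚ) + 1))) *
                ((j ⟨min i n, Nat.lt_succ_of_le (Nat.min_le_right i n)⟩ : ℚ) *
                  ((i + 1).factorial : ℚ) * ((n - i).factorial : ℚ)))
              / (PBaux.D (n + 1) j : ℚ) * PBaux.A a (n + 1) j := by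
        rw [Finset.sum_div, Finset.sum_mul]
        exact Finset.sum_congr rfl fun i _ => by ring
      rw [step1, PBaux.scalar n k hk hkn j hQ.1 hQ.2, Nat.cast_sub hkn.le]
      simp only [Nat.factorial_one, Nat.cast_one]
      ring
    · simp only [if_neg hQ, Finset.sum_const_zero, mul_zero]
  rw [Finset.sum_congr rfl hper, ← Finset.mul_sum, ← mul_assoc, one_div,
    inv_mul_cancel₀ hne, one_mul]
end

section
/- Let j_1, …, j_k be positive integers with j_1 + ⋯ + j_k = n. Then the coefficient of the monomial d_{j_1} d_{j_2} ⋯ d_{j_k} in the noncommutative partial Munthe-Kaas Bell polynomial MB_{n,k} equals the number of set partitions {π_1, …, π_k} of {1,…,n} into k blocks such that card(π_ℓ) = j_ℓ for each 1 ≤ ℓ ≤ k and min(π_1) < min(π_2) < ⋯ < min(π_k). -/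
open Finset BigOperators

noncomputable section

/-- The free associative `ℚ`-algebra on noncommuting indeterminates `d_1, d_2, …` (monomials are
words over the positive integers), with polynomial coefficients in a central variable `t`. -/
abbrev MKAlg : Type := MonoidAlgebra (Polynomial ℚ) (FreeMonoid ℕ+)

/-- The word obtained from `w` by incrementing its `ℓ`-th letter (`d_i ↦ d_{i+1}`). -/
def incrWord (w : FreeMonoid ℕ+) (ℓ : ℕ) : FreeMonoid ℕ+ :=
  FreeMonoid.ofList ((FreeMonoid.toList w).set ℓ ((FreeMonoid.toList w).getD ℓ 1 + 1))

/-- The derivation `∂` on a single monomial: the Leibniz rule with `d_i ↦ d_{i+1}`. -/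
def derivWord (w : FreeMonoid ℕ+) : MKAlg :=
  ∑ ℓ ∈ Finset.range (FreeMonoid.toList w).length,
    MonoidAlgebra.single (incrWord w ℓ) (1 : Polynomial ℚ)

/-- The linear extension of `∂` to the whole algebra. -/
def mkDeriv (f : MKAlg) : MKAlg :=
  f.coeff.sum fun w c => c • derivWord w

/-- The Munthe-Kaas Bell polynomial `MB_n(t) = 1·(t·μ + ∂)^n`, where `μ` is right multiplication
by `d_1`: iterate the operator `t·μ + ∂` starting from the unit `1`. -/
def MB : ℕ → MKAlg
  | 0 => 1
  | n + 1 =>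
      MB n * MonoidAlgebra.single (FreeMonoid.of (1 : ℕ+)) (Polynomial.X : Polynomial ℚ) +
        mkDeriv (MB n)

end

/-! ### Auxiliary list-level definitions -/

def wsum : List ℕ+ → ℕ
  | [] => 0
  | a :: t => (a : ℕ) + wsum t

@[simp] lemma wsum_nil : wsum [] = 0 := rfl
@[simp] lemma wsum_cons (a : ℕ+) (t : List ℕ+) : wsum (a :: t) = (a : ℕ) + wsum t := rfl

lemma wsum_append (l t : List ℕ+) : wsum (l ++ t) = wsum l + wsum t := by
  induction l with
  | nil => simp
  | cons a u ih =>
    rw [List.cons_append, wsum_cons, wsum_cons, ih, Nat.add_assoc]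

lemma wsum_eq_zero {l : List ℕ+} (h : wsum l = 0) : l = [] := by
  cases l with
  | nil => rfl
  | cons a t =>
    exfalso
    have ha := a.pos
    rw [wsum_cons] at h
    omega

def incrL (w : List ℕ+) (ℓ : ℕ) : List ℕ+ := w.set ℓ (w.getD ℓ 1 + 1)

def decrL (w : List ℕ+) (ℓ : ℕ) : List ℕ+ := w.set ℓ (w.getD ℓ 1 - 1)

@[simp] lemma incrL_nil (ℓ : ℕ) : incrL [] ℓ = [] := rfl
@[simp] lemma incrL_cons_zero (a : ℕ+) (t : List ℕ+) : incrL (a :: t) 0 = (a + 1) :: t := rfl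
@[simp] lemma incrL_cons_succ (a : ℕ+) (t : List ℕ+) (ℓ : ℕ) :
    incrL (a :: t) (ℓ + 1) = a :: incrL t ℓ := rfl
@[simp] lemma decrL_nil (ℓ : ℕ) : decrL [] ℓ = [] := rfl
@[simp] lemma decrL_cons_zero (a : ℕ+) (t : List ℕ+) : decrL (a :: t) 0 = (a - 1) :: t := rfl
@[simp] lemma decrL_cons_succ (a : ℕ+) (t : List ℕ+) (ℓ : ℕ) :
    decrL (a :: t) (ℓ + 1) = a :: decrL t ℓ := rfl

lemma incrWord_ofList (v : List ℕ+) (ℓ : ℕ) :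
    incrWord (FreeMonoid.ofList v) ℓ = FreeMonoid.ofList (incrL v ℓ) := rfl

@[simp] lemma length_incrL (w : List ℕ+) (ℓ : ℕ) : (incrL w ℓ).length = w.length :=
  List.length_set ..

@[simp] lemma length_decrL (w : List ℕ+) (ℓ : ℕ) : (decrL w ℓ).length = w.length :=
  List.length_set ..

lemma pnat_sub_one_coe {a : ℕ+} (h2 : 2 ≤ (a : ℕ)) : ((a - 1 : ℕ+) : ℕ) = (a : ℕ) - 1 := by
  have hlt : (1 : ℕ+) < a := by rw [← PNat.coe_lt_coe, PNat.one_coe]; omega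
  rw [PNat.sub_coe, if_pos hlt]; simp

lemma pnat_add_sub_one (b : ℕ+) : b + 1 - 1 = b := by
  apply PNat.coe_injective
  rw [pnat_sub_one_coe (by simp [PNat.add_coe]; exact b.pos)]
  simp

lemma incrL_decrL {w : List ℕ+} {ℓ : ℕ} (hℓ : ℓ < w.length)
    (h2 : 2 ≤ ((w.getD ℓ 1 : ℕ+) : ℕ)) : incrL (decrL w ℓ) ℓ = w := by
  induction w generalizing ℓ with
  | nil => simp at hℓ
  | cons a t ih =>
    cases ℓ with
    | zero =>
      simp only [List.getD_cons_zero] at h2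
      simp only [decrL_cons_zero, incrL_cons_zero, List.cons.injEq, and_true]
      apply PNat.coe_injective
      rw [PNat.add_coe, pnat_sub_one_coe h2, PNat.one_coe]
      omega
    | succ ℓ =>
      simp only [List.getD_cons_succ] at h2
      simp only [decrL_cons_succ, incrL_cons_succ, List.cons.injEq, true_and]
      exact ih (by simpa using hℓ) h2

lemma incrL_eq_iff {w v : List ℕ+} {ℓ : ℕ} (hℓ : ℓ < w.length) :
    incrL v ℓ = w ↔ (2 ≤ ((w.getD ℓ 1 : ℕ+) : ℕ) ∧ v = decrL w ℓ) := by
  constructor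
  · intro h
    induction w generalizing v ℓ with
    | nil => simp at hℓ
    | cons a t ih =>
      cases v with
      | nil =>
        simp only [incrL_nil] at h
        rw [← h] at hℓ
        simp at hℓ
      | cons b u =>
        cases ℓ with
        | zero =>
          simp only [incrL_cons_zero, List.cons.injEq] at h
          obtain ⟨rfl, rfl⟩ := h
          have hb := b.pos
          refine ⟨by simp [List.getD_cons_zero]; exact hb, ?_⟩
          simp only [decrL_cons_zero, List.getD_cons_zero, List.cons.injEq, and_true]
          exact (pnat_add_sub_one b).symm
        | succ ℓ =>
          simp only [incrL_cons_succ, List.cons.injEq] at h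
          obtain ⟨rfl, h⟩ := h
          obtain ⟨h2, rfl⟩ := ih (by simpa using hℓ) h
          exact ⟨by simpa [List.getD_cons_succ] using h2, by simp⟩
  · rintro ⟨h2, rfl⟩
    exact incrL_decrL hℓ h2

lemma wsum_decrL {w : List ℕ+} {ℓ : ℕ} (hℓ : ℓ < w.length)
    (h2 : 2 ≤ ((w.getD ℓ 1 : ℕ+) : ℕ)) : wsum (decrL w ℓ) + 1 = wsum w := by
  induction w generalizing ℓ with
  | nil => simp at hℓ
  | cons a t ih =>
    cases ℓ with
    | zero =>
      simp only [List.getD_cons_zero] at h2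
      simp only [decrL_cons_zero, wsum_cons, pnat_sub_one_coe h2]
      omega
    | succ ℓ =>
      simp only [List.getD_cons_succ] at h2
      have := ih (by simpa using hℓ) h2
      simp only [decrL_cons_succ, wsum_cons]
      omega

/-! ### The product-of-binomials coefficient -/

def coef : List ℕ+ → ℕ
  | [] => 1
  | a :: l => Nat.choose ((a : ℕ) + wsum l - 1) ((a : ℕ) - 1) * coef l

@[simp] lemma coef_nil : coef [] = 1 := rfl

lemma coef_cons (a : ℕ+) (l : List ℕ+) :
    coef (a :: l) = Nat.choose ((a : ℕ) + wsum l - 1) ((a : ℕ) - 1) * coef l := rfl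

@[simp] lemma coef_singleton (b : ℕ+) : coef [b] = 1 := by
  simp [coef_cons, Nat.choose_self]

lemma wsum_dropLast {v : List ℕ+} (hv : v ≠ []) (hlast : v.getLast? = some 1) :
    wsum v.dropLast + 1 = wsum v := by
  have h1 : v.getLast hv = 1 := by
    have := List.getLast?_eq_getLast hv
    rw [hlast] at this
    exact (Option.some_injective _ this.symm)
  conv_rhs => rw [← List.dropLast_append_getLast hv]
  rw [wsum_append, h1]
  simp [wsum]

lemma coef_rec (w : List ℕ+) (hw : w ≠ []) :
    coef w = (if w.getLast? = some 1 then coef w.dropLast else 0)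
      + ∑ ℓ ∈ Finset.range w.length,
          (if 2 ≤ ((w.getD ℓ 1 : ℕ+) : ℕ) then coef (decrL w ℓ) else 0) := by
  induction w with
  | nil => exact absurd rfl hw
  | cons a v ih =>
    rcases eq_or_ne v [] with rfl | hv
    · have ha := a.pos
      rcases Nat.lt_or_ge (a : ℕ) 2 with h2 | h2
      · have ha1 : a = 1 := by
          have h1 : (a : ℕ) = 1 := by omega
          exact PNat.coe_injective (by simp [h1])
        subst ha1
        simp [List.getLast?]
      · have hne : a ≠ 1 := by
          intro h; rw [h] at h2; simp at h2
        rw [coef_singleton]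
        rw [if_neg (by simpa [List.getLast?] using hne)]
        simp only [List.length_cons, List.length_nil, zero_add, Finset.sum_range_one,
          List.getD_cons_zero, if_pos h2, decrL_cons_zero, coef_singleton]
    · -- v nonempty
      obtain ⟨c, v', rfl⟩ := List.exists_cons_of_ne_nil hv
      have hm : 1 ≤ wsum (c :: v') := by have := c.pos; simp [wsum_cons]; omega
      have ha := a.pos
      rw [List.getLast?_cons_cons]
      have hdrop : (a :: c :: v').dropLast = a :: (c :: v').dropLast := rfl
      rw [hdrop]
      rw [List.length_cons, Finset.sum_range_succ']
      simp only [List.getD_cons_succ, decrL_cons_succ, List.getD_cons_zero, decrL_cons_zero]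
      have hsum_eq : ∑ ℓ ∈ Finset.range (c :: v').length,
          (if 2 ≤ (((c :: v').getD ℓ 1 : ℕ+) : ℕ) then coef (a :: decrL (c :: v') ℓ) else 0)
          = Nat.choose ((a : ℕ) + wsum (c :: v') - 2) ((a : ℕ) - 1) *
            ∑ ℓ ∈ Finset.range (c :: v').length,
              (if 2 ≤ (((c :: v').getD ℓ 1 : ℕ+) : ℕ) then coef (decrL (c :: v') ℓ) else 0) := by
        rw [Finset.mul_sum]
        refine Finset.sum_congr rfl fun ℓ hℓ => ?_
        rw [Finset.mem_range] at hℓ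
        split_ifs with h2
        · rw [coef_cons]
          have := wsum_decrL hℓ h2
          have harg : (a : ℕ) + wsum (decrL (c :: v') ℓ) - 1
              = (a : ℕ) + wsum (c :: v') - 2 := by omega
          rw [harg]
        · simp
      have hdropterm : (if (c :: v').getLast? = some 1 then coef (a :: (c :: v').dropLast) else 0)
          = Nat.choose ((a : ℕ) + wsum (c :: v') - 2) ((a : ℕ) - 1) *
            (if (c :: v').getLast? = some 1 then coef ((c :: v').dropLast) else 0) := by
        split_ifs with hl
        · rw [coef_cons]
          have := wsum_dropLast hv hl
          have harg : (a : ℕ) + wsum ((c :: v').dropLast) - 1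
              = (a : ℕ) + wsum (c :: v') - 2 := by omega
          rw [harg]
        · simp
      have hzeroterm : (if 2 ≤ ((a : ℕ+) : ℕ) then coef ((a - 1) :: c :: v') else 0)
          = (if 2 ≤ ((a : ℕ+) : ℕ) then
              Nat.choose ((a : ℕ) + wsum (c :: v') - 2) ((a : ℕ) - 2) else 0)
            * coef (c :: v') := by
        split_ifs with h2
        · rw [coef_cons, pnat_sub_one_coe h2]
          congr 2 <;> omega
        · simp
      rw [hsum_eq, hdropterm, hzeroterm, coef_cons]
      have IH := ih hv
      have key : Nat.choose ((a : ℕ) + wsum (c :: v') - 1) ((a : ℕ) - 1)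
          = Nat.choose ((a : ℕ) + wsum (c :: v') - 2) ((a : ℕ) - 1)
            + (if 2 ≤ ((a : ℕ+) : ℕ) then
                Nat.choose ((a : ℕ) + wsum (c :: v') - 2) ((a : ℕ) - 2) else 0) := by
        rcases Nat.lt_or_ge (a : ℕ) 2 with hlt | h2
        · have h1 : (a : ℕ) = 1 := by omega
          rw [if_neg (by omega), h1]
          have e1 : 1 + wsum (c :: v') - 1 = wsum (c :: v') := by omega
          have e2 : 1 + wsum (c :: v') - 2 = wsum (c :: v') - 1 := by omega
          simp [e1, e2]
        · rw [if_pos h2]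
          obtain ⟨cc, hcc⟩ : ∃ cc, (a : ℕ) = cc + 2 := ⟨(a : ℕ) - 2, by omega⟩
          rw [hcc]
          have e1 : cc + 2 + wsum (c :: v') - 1 = (cc + wsum (c :: v')) + 1 := by omega
          have e2 : cc + 2 - 1 = cc + 1 := by omega
          have e3 : cc + 2 + wsum (c :: v') - 2 = cc + wsum (c :: v') := by omega
          have e4 : cc + 2 - 2 = cc := by omega
          rw [e1, e2, e3, e4, Nat.choose_succ_succ (cc + wsum (c :: v')) cc]
          simp only [Nat.succ_eq_add_one]
          omega
      rw [key, IH]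
      ring

/-! ### Evaluation lemmas for the algebra -/

lemma mul_single_d1_apply (g : MKAlg) (w : List ℕ+) :
    (g * MonoidAlgebra.single (FreeMonoid.of (1 : ℕ+)) (Polynomial.X : Polynomial ℚ)).coeff
        (FreeMonoid.ofList w) =
      if w.getLast? = some 1 then g.coeff (FreeMonoid.ofList w.dropLast) * Polynomial.X else 0 := by
  split_ifs with h
  · have hw : w ≠ [] := by rintro rfl; simp at h
    have h1 : w.getLast hw = 1 := by
      have := List.getLast?_eq_getLast hw
      rw [h] at this
      exact Option.some_injective _ this.symm
    have hw2 : w.dropLast ++ [1] = w := by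
      conv_rhs => rw [← List.dropLast_append_getLast hw, h1]
    apply MonoidAlgebra.coeff_mul_single_eq_coeff_mul
    intro a _
    constructor
    · intro hh
      have h3 : FreeMonoid.toList a ++ [(1 : ℕ+)] = w.dropLast ++ [1] := by
        have h5 := congrArg FreeMonoid.toList hh
        rw [← hw2] at h5
        exact h5
      have h4 : FreeMonoid.toList a = w.dropLast := List.append_left_injective [(1:ℕ+)] h3
      exact congrArg FreeMonoid.ofList h4
    · rintro rfl
      apply congrArg FreeMonoid.ofList (α := List ℕ+)
      simpa using hw2
  · apply MonoidAlgebra.mul_single_apply_of_not_exists_mul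
    rintro ⟨d, hd⟩
    have : w = FreeMonoid.toList d ++ [(1:ℕ+)] := congrArg FreeMonoid.toList hd
    rw [this, List.getLast?_concat] at h
    exact h rfl

lemma derivWord_apply (lv w : List ℕ+) :
    (derivWord (FreeMonoid.ofList lv)).coeff (FreeMonoid.ofList w) =
      ∑ ℓ ∈ Finset.range w.length, (if incrL lv ℓ = w then (1 : Polynomial ℚ) else 0) := by
  have step : (derivWord (FreeMonoid.ofList lv)).coeff (FreeMonoid.ofList w) =
      ∑ ℓ ∈ Finset.range lv.length, (if incrL lv ℓ = w then (1 : Polynomial ℚ) else 0) := by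
    classical
    rw [derivWord, MonoidAlgebra.coeff_sum, Finsupp.finset_sum_apply]
    refine Finset.sum_congr rfl fun ℓ _ => ?_
    rw [MonoidAlgebra.coeff_single_apply, incrWord_ofList]
    exact if_congr ⟨fun hh => congrArg FreeMonoid.toList hh,
      fun hh => congrArg FreeMonoid.ofList hh⟩ rfl rfl
  rw [step]
  rcases eq_or_ne lv.length w.length with hlen | hlen
  · rw [hlen]
  · rw [Finset.sum_eq_zero, Finset.sum_eq_zero]
    · intro ℓ _
      rw [if_neg]
      intro hh; rw [← hh, length_incrL] at hlen; exact hlen rfl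
    · intro ℓ _
      rw [if_neg]
      intro hh; rw [← hh, length_incrL] at hlen; exact hlen rfl

lemma mkDeriv_apply (g : MKAlg) (w : List ℕ+) :
    (mkDeriv g).coeff (FreeMonoid.ofList w) =
      ∑ ℓ ∈ Finset.range w.length,
        (if 2 ≤ ((w.getD ℓ 1 : ℕ+) : ℕ) then g.coeff (FreeMonoid.ofList (decrL w ℓ)) else 0) := by
  rw [mkDeriv, Finsupp.sum, MonoidAlgebra.coeff_sum, Finsupp.finset_sum_apply]
  have step : ∀ v ∈ g.coeff.support, (g.coeff v • derivWord v).coeff (FreeMonoid.ofList w) =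
      ∑ ℓ ∈ Finset.range w.length,
        (if incrL (FreeMonoid.toList v) ℓ = w then g.coeff v else 0) := by
    intro v _
    rw [MonoidAlgebra.coeff_smul_apply]
    have : (derivWord v).coeff (FreeMonoid.ofList w) =
        ∑ ℓ ∈ Finset.range w.length,
          (if incrL (FreeMonoid.toList v) ℓ = w then (1 : Polynomial ℚ) else 0) := by
      conv_lhs => rw [← FreeMonoid.ofList_toList v]
      exact derivWord_apply _ w
    rw [this, Finset.smul_sum]
    refine Finset.sum_congr rfl fun ℓ _ => ?_
    split_ifs
    · exact (smul_eq_mul (g.coeff v) (1 : Polynomial ℚ)).trans (mul_one (g.coeff v))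
    · exact smul_zero _
  rw [Finset.sum_congr rfl step, Finset.sum_comm]
  refine Finset.sum_congr rfl fun ℓ hℓ => ?_
  rw [Finset.mem_range] at hℓ
  split_ifs with h2
  · have hcond : ∀ v : FreeMonoid ℕ+,
        (incrL (FreeMonoid.toList v) ℓ = w) ↔ v = FreeMonoid.ofList (decrL w ℓ) := by
      intro v
      rw [incrL_eq_iff hℓ]
      constructor
      · rintro ⟨-, hv⟩; exact congrArg FreeMonoid.ofList hv
      · rintro rfl; exact ⟨h2, rfl⟩
    classical
    have hrw : (∑ v ∈ g.coeff.support, if incrL (FreeMonoid.toList v) ℓ = w then g.coeff v else 0)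
        = ∑ v ∈ g.coeff.support, if v = FreeMonoid.ofList (decrL w ℓ) then g.coeff v else 0 :=
      Finset.sum_congr rfl fun v _ => if_congr (hcond v) rfl rfl
    rw [hrw, Finset.sum_ite_eq' g.coeff.support (FreeMonoid.ofList (decrL w ℓ)) (fun v => g.coeff v)]
    split_ifs with hmem
    · rfl
    · exact (Finsupp.notMem_support_iff.mp hmem).symm
  · apply Finset.sum_eq_zero
    intro v _
    rw [if_neg]
    intro hh
    exact h2 ((incrL_eq_iff hℓ).mp hh).1

lemma MB_apply (n : ℕ) (w : List ℕ+) :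
    (MB n).coeff (FreeMonoid.ofList w) =
      if wsum w = n then (coef w : Polynomial ℚ) * Polynomial.X ^ w.length else 0 := by
  classical
  induction n generalizing w with
  | zero =>
    rw [MB, MonoidAlgebra.one_def, MonoidAlgebra.coeff_single_apply]
    rcases eq_or_ne w [] with rfl | hw
    · rw [if_pos (show (1 : FreeMonoid ℕ+) = FreeMonoid.ofList [] from rfl)]
      rw [if_pos (show wsum [] = 0 from rfl)]
      simp
    · rw [if_neg, if_neg]
      · intro h; exact hw (wsum_eq_zero h)
      · intro h
        exact hw (congrArg FreeMonoid.toList h).symm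
  | succ n ih =>
    rw [MB, MonoidAlgebra.coeff_add, Finsupp.add_apply, mul_single_d1_apply, mkDeriv_apply]
    rcases eq_or_ne (wsum w) (n + 1) with hw | hw
    · rw [if_pos hw]
      have hwne : w ≠ [] := by
        intro h; rw [h] at hw; simp at hw
      have hlen : 1 ≤ w.length := List.length_pos_iff.mpr hwne
      -- part 1
      have hpart1 : (if w.getLast? = some 1 then
            (MB n).coeff (FreeMonoid.ofList w.dropLast) * Polynomial.X else 0)
          = ((if w.getLast? = some 1 then coef w.dropLast else 0 : ℕ) : Polynomial ℚ)
              * Polynomial.X ^ w.length := by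
        split_ifs with hl
        · rw [ih]
          rw [if_pos (by have := wsum_dropLast hwne hl; omega)]
          rw [List.length_dropLast]
          rw [mul_assoc, ← pow_succ]
          congr 2
          omega
        · simp
      -- part 2
      have hpart2 : (∑ ℓ ∈ Finset.range w.length,
            if 2 ≤ ((w.getD ℓ 1 : ℕ+) : ℕ) then (MB n).coeff (FreeMonoid.ofList (decrL w ℓ)) else 0)
          = ((∑ ℓ ∈ Finset.range w.length,
              if 2 ≤ ((w.getD ℓ 1 : ℕ+) : ℕ) then coef (decrL w ℓ) else 0 : ℕ) : Polynomial ℚ)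
              * Polynomial.X ^ w.length := by
        push_cast
        rw [Finset.sum_mul]
        refine Finset.sum_congr rfl fun ℓ hℓ => ?_
        rw [Finset.mem_range] at hℓ
        split_ifs with h2
        · rw [ih]
          rw [if_pos (by have := wsum_decrL hℓ h2; omega), length_decrL]
        · simp
      rw [hpart1, hpart2, ← add_mul, ← Nat.cast_add, ← coef_rec w hwne]
    · rw [if_neg hw]
      have hpart1 : (if w.getLast? = some 1 then
            (MB n).coeff (FreeMonoid.ofList w.dropLast) * Polynomial.X else 0) = 0 := by
        split_ifs with hl
        · have hwne : w ≠ [] := by rintro rfl; simp at hl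
          rw [ih, if_neg, zero_mul]
          have := wsum_dropLast hwne hl
          omega
        · rfl
      have hpart2 : (∑ ℓ ∈ Finset.range w.length,
            if 2 ≤ ((w.getD ℓ 1 : ℕ+) : ℕ) then (MB n).coeff (FreeMonoid.ofList (decrL w ℓ)) else 0)
          = 0 := by
        apply Finset.sum_eq_zero
        intro ℓ hℓ
        rw [Finset.mem_range] at hℓ
        split_ifs with h2
        · rw [ih, if_neg]
          have := wsum_decrL hℓ h2
          omega
        · rfl
      rw [hpart1, hpart2, add_zero]

lemma wsum_ofFn {k : ℕ} (j : Fin k → ℕ+) : wsum (List.ofFn j) = ∑ ℓ, (j ℓ : ℕ) := by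
  induction k with
  | zero => simp [List.ofFn_zero]
  | succ k ih => rw [List.ofFn_succ, wsum_cons, ih, Fin.sum_univ_succ]

lemma MB_coeff_eq_coef (n k : ℕ) (j : Fin k → ℕ+) (hsum : (∑ ℓ, (j ℓ : ℕ)) = n) :
    ((MB n).coeff (FreeMonoid.ofList (List.ofFn j))).coeff k = (coef (List.ofFn j) : ℚ) := by
  have hws : wsum (List.ofFn j) = n := by rw [wsum_ofFn]; exact hsum
  have hlen : (List.ofFn j).length = k := List.length_ofFn
  rw [MB_apply, if_pos hws, hlen]
  rw [← map_natCast (Polynomial.C : ℚ →+* Polynomial ℚ) (coef (List.ofFn j)),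
    Polynomial.coeff_C_mul, Polynomial.coeff_X_pow, if_pos rfl, mul_one]

/-! ### Combinatorial part -/

def Conds {n k : ℕ} (j : Fin k → ℕ+) (p : Fin k → Finset (Fin n)) : Prop :=
  (∀ ℓ, (p ℓ).card = (j ℓ : ℕ)) ∧
  (∀ ℓ₁ ℓ₂, ℓ₁ ≠ ℓ₂ → Disjoint (p ℓ₁) (p ℓ₂)) ∧
  Finset.univ.biUnion p = Finset.univ ∧
  (∀ ℓ₁ ℓ₂, ℓ₁ < ℓ₂ → (p ℓ₁).min < (p ℓ₂).min)

lemma min'_map {α β : Type*} [LinearOrder α] [LinearOrder β] (f : α ↪o β) (s : Finset α)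
    (hs : s.Nonempty) (hs' : (s.map f.toEmbedding).Nonempty) :
    (s.map f.toEmbedding).min' hs' = f (s.min' hs) := by
  apply le_antisymm
  · exact Finset.min'_le _ _ (Finset.mem_map_of_mem _ (s.min'_mem hs))
  · apply Finset.le_min'
    intro y hy
    obtain ⟨x, hx, rfl⟩ := Finset.mem_map.mp hy
    exact f.monotone (Finset.min'_le s x hx)

lemma min_lt_min_iff {γ : Type*} [LinearOrder γ] {A B : Finset γ} (hA : A.Nonempty)
    (hB : B.Nonempty) : A.min < B.min ↔ A.min' hA < B.min' hB := by
  rw [← Finset.coe_min' hA, ← Finset.coe_min' hB, WithTop.coe_lt_coe]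

section Transfer

variable {n m k : ℕ} [NeZero n]

def Pmap (S : Finset (Fin n)) (hm : Sᶜ.card = m) (q : Fin k → Finset (Fin m)) :
    Fin (k + 1) → Finset (Fin n) :=
  Fin.cases S (fun i => (q i).map (Sᶜ.orderEmbOfFin hm).toEmbedding)

@[simp] lemma Pmap_zero (S : Finset (Fin n)) (hm : Sᶜ.card = m) (q : Fin k → Finset (Fin m)) :
    Pmap S hm q 0 = S := rfl

@[simp] lemma Pmap_succ (S : Finset (Fin n)) (hm : Sᶜ.card = m) (q : Fin k → Finset (Fin m))
    (i : Fin k) : Pmap S hm q i.succ = (q i).map (Sᶜ.orderEmbOfFin hm).toEmbedding := rfl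

noncomputable def Qmap (S : Finset (Fin n)) (hm : Sᶜ.card = m) (p : Fin (k + 1) → Finset (Fin n))
    (i : Fin k) : Finset (Fin m) :=
  (p i.succ).preimage (Sᶜ.orderEmbOfFin hm) ((Sᶜ.orderEmbOfFin hm).injective.injOn)

lemma map_emb_subset (S : Finset (Fin n)) (hm : Sᶜ.card = m) (q : Finset (Fin m)) :
    q.map (Sᶜ.orderEmbOfFin hm).toEmbedding ⊆ Sᶜ := by
  intro x hx
  obtain ⟨y, -, rfl⟩ := Finset.mem_map.mp hx
  exact Finset.orderEmbOfFin_mem _ hm y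

lemma mem_range_emb_of_mem_compl {S : Finset (Fin n)} (hm : Sᶜ.card = m) {x : Fin n}
    (hx : x ∈ Sᶜ) : ∃ y : Fin m, Sᶜ.orderEmbOfFin hm y = x := by
  have : x ∈ Set.range (Sᶜ.orderEmbOfFin hm) := by
    rw [Finset.range_orderEmbOfFin]
    exact hx
  exact this

lemma map_Qmap (S : Finset (Fin n)) (hm : Sᶜ.card = m) {p : Fin (k + 1) → Finset (Fin n)}
    {i : Fin k} (hsub : p i.succ ⊆ Sᶜ) :
    (Qmap S hm p i).map (Sᶜ.orderEmbOfFin hm).toEmbedding = p i.succ := by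
  classical
  have hco : ⇑(Sᶜ.orderEmbOfFin hm).toEmbedding = ⇑(Sᶜ.orderEmbOfFin hm) := rfl
  rw [Qmap, Finset.map_eq_image, hco, Finset.image_preimage]
  apply Finset.filter_true_of_mem
  intro x hx
  rw [Finset.range_orderEmbOfFin]
  exact hsub hx

lemma conds_Pmap {j : Fin (k + 1) → ℕ+} {S : Finset (Fin n)} (hS0 : (0 : Fin n) ∈ S)
    (hScard : S.card = (j 0 : ℕ)) (hm : Sᶜ.card = m) {q : Fin k → Finset (Fin m)}
    (hq : Conds (fun i => j i.succ) q) : Conds j (Pmap S hm q) := by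
  obtain ⟨hqc, hqd, hqu, hqm⟩ := hq
  have hsub := fun i => map_emb_subset S hm (q i)
  have hqne : ∀ i, (q i).Nonempty := fun i =>
    Finset.card_pos.mp (by rw [hqc i]; exact (j i.succ).pos)
  have hmapne : ∀ i, ((q i).map (Sᶜ.orderEmbOfFin hm).toEmbedding).Nonempty := fun i =>
    (hqne i).map
  have hSne : S.Nonempty := ⟨0, hS0⟩
  refine ⟨?_, ?_, ?_, ?_⟩
  · intro ℓ
    induction ℓ using Fin.cases with
    | zero => simpa using hScard
    | succ i => rw [Pmap_succ, Finset.card_map, hqc i]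
  · intro ℓ₁ ℓ₂ hne
    induction ℓ₁ using Fin.cases with
    | zero =>
      induction ℓ₂ using Fin.cases with
      | zero => exact absurd rfl hne
      | succ i =>
        rw [Pmap_zero, Pmap_succ, Finset.disjoint_left]
        intro x hxS hxm
        exact (Finset.mem_compl.mp (hsub i hxm)) hxS
    | succ i₁ =>
      induction ℓ₂ using Fin.cases with
      | zero =>
        rw [Pmap_zero, Pmap_succ, Finset.disjoint_left]
        intro x hxm hxS
        exact (Finset.mem_compl.mp (hsub i₁ hxm)) hxS
      | succ i₂ =>
        rw [Pmap_succ, Pmap_succ, Finset.disjoint_map]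
        exact hqd i₁ i₂ (fun h => hne (by rw [h]))
  · apply Finset.eq_univ_iff_forall.mpr
    intro x
    by_cases hx : x ∈ S
    · exact Finset.mem_biUnion.mpr ⟨0, Finset.mem_univ _, by simpa using hx⟩
    · obtain ⟨y, rfl⟩ := mem_range_emb_of_mem_compl hm (Finset.mem_compl.mpr hx)
      have hy : y ∈ Finset.univ.biUnion q := by rw [hqu]; exact Finset.mem_univ y
      obtain ⟨i, -, hyi⟩ := Finset.mem_biUnion.mp hy
      exact Finset.mem_biUnion.mpr ⟨i.succ, Finset.mem_univ _,
        by rw [Pmap_succ]; exact Finset.mem_map_of_mem _ hyi⟩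
  · intro ℓ₁ ℓ₂ hlt
    induction ℓ₁ using Fin.cases with
    | zero =>
      induction ℓ₂ using Fin.cases with
      | zero => exact absurd hlt (lt_irrefl _)
      | succ i =>
        rw [Pmap_zero, Pmap_succ, min_lt_min_iff hSne (hmapne i)]
        have h1 : S.min' hSne = 0 :=
          le_antisymm (Finset.min'_le _ _ hS0) (Fin.zero_le _)
        rw [h1]
        apply (Fin.pos_iff_ne_zero' _).mpr
        intro h0
        have h2 : (0 : Fin n) ∈ Sᶜ := by
          rw [← h0]
          exact hsub i (Finset.min'_mem _ (hmapne i))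
        exact (Finset.mem_compl.mp h2) hS0
    | succ i₁ =>
      induction ℓ₂ using Fin.cases with
      | zero =>
        exfalso
        have := hlt.trans_le (Fin.zero_le i₁.succ)
        exact absurd this (lt_irrefl _)
      | succ i₂ =>
        rw [Pmap_succ, Pmap_succ, min_lt_min_iff (hmapne i₁) (hmapne i₂),
          min'_map _ _ (hqne i₁) _, min'_map _ _ (hqne i₂) _, OrderEmbedding.lt_iff_lt,
          ← min_lt_min_iff (hqne i₁) (hqne i₂)]
        exact hqm i₁ i₂ (by rwa [Fin.succ_lt_succ_iff] at hlt)

lemma conds_Qmap {j : Fin (k + 1) → ℕ+} {S : Finset (Fin n)} (hS0 : (0 : Fin n) ∈ S)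
    (hm : Sᶜ.card = m) {p : Fin (k + 1) → Finset (Fin n)} (hp : Conds j p) (hp0 : p 0 = S) :
    Conds (fun i => j i.succ) (Qmap S hm p) := by
  obtain ⟨hpc, hpd, hpu, hpm⟩ := hp
  have hsub : ∀ i : Fin k, p i.succ ⊆ Sᶜ := by
    intro i x hx
    rw [Finset.mem_compl]
    intro hxS
    exact (Finset.disjoint_left.mp (hpd i.succ 0 (Fin.succ_ne_zero i)) hx) (by rwa [hp0])
  have hmi : ∀ i, (Qmap S hm p i).map (Sᶜ.orderEmbOfFin hm).toEmbedding = p i.succ :=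
    fun i => map_Qmap S hm (hsub i)
  have hQc : ∀ i, (Qmap S hm p i).card = ((j i.succ : ℕ+) : ℕ) := by
    intro i
    rw [← Finset.card_map (Sᶜ.orderEmbOfFin hm).toEmbedding, hmi i, hpc i.succ]
  have hQne : ∀ i, (Qmap S hm p i).Nonempty := fun i =>
    Finset.card_pos.mp (by rw [hQc i]; exact (j i.succ).pos)
  have hpne : ∀ i : Fin k, (p i.succ).Nonempty := fun i =>
    Finset.card_pos.mp (by rw [hpc i.succ]; exact (j i.succ).pos)
  refine ⟨hQc, ?_, ?_, ?_⟩
  · intro i₁ i₂ hne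
    have h := hpd i₁.succ i₂.succ (fun h => hne (Fin.succ_injective _ h))
    rw [← hmi i₁, ← hmi i₂, Finset.disjoint_map] at h
    exact h
  · apply Finset.eq_univ_iff_forall.mpr
    intro y
    have hyc : Sᶜ.orderEmbOfFin hm y ∈ Sᶜ := Finset.orderEmbOfFin_mem _ hm y
    have : Sᶜ.orderEmbOfFin hm y ∈ Finset.univ.biUnion p := by
      rw [hpu]; exact Finset.mem_univ _
    obtain ⟨ℓ, -, hℓ⟩ := Finset.mem_biUnion.mp this
    induction ℓ using Fin.cases with
    | zero =>
      exfalso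
      rw [hp0] at hℓ
      exact (Finset.mem_compl.mp hyc) hℓ
    | succ i =>
      refine Finset.mem_biUnion.mpr ⟨i, Finset.mem_univ _, ?_⟩
      rw [Qmap, Finset.mem_preimage]
      exact hℓ
  · intro i₁ i₂ hlt
    have h := hpm i₁.succ i₂.succ (Fin.succ_lt_succ_iff.mpr hlt)
    rw [← hmi i₁, ← hmi i₂, min_lt_min_iff ((hQne i₁).map) ((hQne i₂).map),
      min'_map _ _ (hQne i₁) _, min'_map _ _ (hQne i₂) _, OrderEmbedding.lt_iff_lt,
      ← min_lt_min_iff (hQne i₁) (hQne i₂)] at h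
    exact h

lemma zero_mem_of_conds {j : Fin (k + 1) → ℕ+} {p : Fin (k + 1) → Finset (Fin n)}
    (hp : Conds j p) : (0 : Fin n) ∈ p 0 := by
  obtain ⟨hpc, hpd, hpu, hpm⟩ := hp
  have h0 : (0 : Fin n) ∈ Finset.univ.biUnion p := by rw [hpu]; exact Finset.mem_univ _
  obtain ⟨ℓ, -, hℓ⟩ := Finset.mem_biUnion.mp h0
  rcases eq_or_ne ℓ 0 with rfl | hne
  · exact hℓ
  · exfalso
    have hlt : (0 : Fin (k + 1)) < ℓ := (Fin.pos_iff_ne_zero' ℓ).mpr hne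
    have hmin := hpm 0 ℓ hlt
    have hne0 : (p 0).Nonempty :=
      Finset.card_pos.mp (by rw [hpc 0]; exact (j 0).pos)
    have hneℓ : (p ℓ).Nonempty := ⟨0, hℓ⟩
    rw [min_lt_min_iff hne0 hneℓ] at hmin
    have h1 : (p ℓ).min' hneℓ ≤ 0 := Finset.min'_le _ _ hℓ
    exact absurd ((hmin.trans_le h1).trans_le (Fin.zero_le _)) (lt_irrefl _)

lemma Pmap_Qmap {j : Fin (k + 1) → ℕ+} {S : Finset (Fin n)} (hm : Sᶜ.card = m)
    {p : Fin (k + 1) → Finset (Fin n)} (hp : Conds j p) (hp0 : p 0 = S) :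
    Pmap S hm (Qmap S hm p) = p := by
  have hsub : ∀ i : Fin k, p i.succ ⊆ Sᶜ := by
    intro i x hx
    rw [Finset.mem_compl]
    intro hxS
    exact (Finset.disjoint_left.mp (hp.2.1 i.succ 0 (Fin.succ_ne_zero i)) hx) (by rwa [hp0])
  funext ℓ
  induction ℓ using Fin.cases with
  | zero => rw [Pmap_zero, hp0]
  | succ i => rw [Pmap_succ, map_Qmap S hm (hsub i)]

lemma Qmap_Pmap {S : Finset (Fin n)} (hm : Sᶜ.card = m) (q : Fin k → Finset (Fin m)) :
    Qmap S hm (Pmap S hm q) = q := by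
  funext i
  ext y
  rw [Qmap, Finset.mem_preimage, Pmap_succ, Finset.mem_map]
  constructor
  · rintro ⟨y', hy', hEq⟩
    rwa [← (Sᶜ.orderEmbOfFin hm).injective hEq]
  · intro hy
    exact ⟨y, hy, rfl⟩

end Transfer

lemma card_subtype_S {n : ℕ} [NeZero n] (c : ℕ) (hc : 1 ≤ c) :
    Nat.card {S : Finset (Fin n) // (0 : Fin n) ∈ S ∧ S.card = c}
      = Nat.choose (n - 1) (c - 1) := by
  classical
  have E : {S : Finset (Fin n) // (0 : Fin n) ∈ S ∧ S.card = c} ≃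
      {T : Finset (Fin n) //
        T ∈ Finset.powersetCard (c - 1) ((Finset.univ : Finset (Fin n)).erase 0)} :=
  { toFun := fun S => ⟨S.1.erase 0, by
      rw [Finset.mem_powersetCard]
      exact ⟨Finset.erase_subset_erase _ (Finset.subset_univ _),
        by rw [Finset.card_erase_of_mem S.2.1, S.2.2]⟩⟩
    invFun := fun T => ⟨insert 0 T.1, by
      have hT := Finset.mem_powersetCard.mp T.2
      have h0T : (0 : Fin n) ∉ T.1 := fun h => (Finset.mem_erase.mp (hT.1 h)).1 rfl
      refine ⟨Finset.mem_insert_self _ _, ?_⟩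
      rw [Finset.card_insert_of_notMem h0T, hT.2]
      omega⟩
    left_inv := fun S => Subtype.ext (Finset.insert_erase S.2.1)
    right_inv := fun T => Subtype.ext (Finset.erase_insert
      (fun h => (Finset.mem_erase.mp ((Finset.mem_powersetCard.mp T.2).1 h)).1 rfl)) }
  rw [Nat.card_congr E, Nat.card_eq_fintype_card, Fintype.card_coe,
    Finset.card_powersetCard, Finset.card_erase_of_mem (Finset.mem_univ _), Finset.card_univ,
    Fintype.card_fin]

lemma nat_card_step {n m k : ℕ} [NeZero n] (j : Fin (k + 1) → ℕ+)
    (hmn : m + ((j 0 : ℕ+) : ℕ) = n) :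
    Nat.card {p : Fin (k + 1) → Finset (Fin n) // Conds j p}
      = Nat.choose (n - 1) (((j 0 : ℕ+) : ℕ) - 1) *
        Nat.card {q : Fin k → Finset (Fin m) // Conds (fun i => j i.succ) q} := by
  classical
  have key : ∀ S : Finset (Fin n), S.card = ((j 0 : ℕ+) : ℕ) → Sᶜ.card = m := by
    intro S hc
    rw [Finset.card_compl, hc, Fintype.card_fin]
    omega
  have E : {p : Fin (k + 1) → Finset (Fin n) // Conds j p} ≃
      ({S : Finset (Fin n) // (0 : Fin n) ∈ S ∧ S.card = ((j 0 : ℕ+) : ℕ)} ×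
        {q : Fin k → Finset (Fin m) // Conds (fun i => j i.succ) q}) :=
  { toFun := fun p =>
      ⟨⟨p.1 0, zero_mem_of_conds p.2, p.2.1 0⟩,
       ⟨Qmap (p.1 0) (key _ (p.2.1 0)) p.1,
        conds_Qmap (zero_mem_of_conds p.2) (key _ (p.2.1 0)) p.2 rfl⟩⟩
    invFun := fun Sq =>
      ⟨Pmap Sq.1.1 (key _ Sq.1.2.2) Sq.2.1,
       conds_Pmap Sq.1.2.1 Sq.1.2.2 (key _ Sq.1.2.2) Sq.2.2⟩
    left_inv := fun p => Subtype.ext (Pmap_Qmap (key _ (p.2.1 0)) p.2 rfl)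
    right_inv := fun Sq => by
      ext : 1
      · exact Subtype.ext rfl
      · exact Subtype.ext (Qmap_Pmap _ _) }
  rw [Nat.card_congr E, Nat.card_prod, card_subtype_S _ (j 0).pos]

lemma partition_count : ∀ {k n : ℕ} (j : Fin k → ℕ+), (∑ ℓ, (j ℓ : ℕ)) = n →
    Nat.card {p : Fin k → Finset (Fin n) // Conds j p} = coef (List.ofFn j) := by
  intro k
  induction k with
  | zero =>
    intro n j hsum
    have hn : n = 0 := by simpa using hsum.symm
    subst hn
    rw [List.ofFn_zero, coef_nil]
    have huniq : ∀ p : Fin 0 → Finset (Fin 0), Conds j p := by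
      intro p
      refine ⟨fun ℓ => ℓ.elim0, fun ℓ => ℓ.elim0, ?_, fun ℓ => ℓ.elim0⟩
      apply Finset.eq_univ_iff_forall.mpr
      intro x
      exact x.elim0
    haveI : Unique {p : Fin 0 → Finset (Fin 0) // Conds j p} :=
      { default := ⟨fun ℓ => ℓ.elim0, huniq _⟩
        uniq := fun p => Subtype.ext (funext fun ℓ => ℓ.elim0) }
    exact Nat.card_unique
  | succ k ih =>
    intro n j hsum
    have hj0 : 1 ≤ ((j 0 : ℕ+) : ℕ) := (j 0).pos
    have hsum' : ((j 0 : ℕ+) : ℕ) + (∑ i : Fin k, ((j i.succ : ℕ+) : ℕ)) = n := by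
      rw [Fin.sum_univ_succ] at hsum
      exact hsum
    haveI : NeZero n := ⟨by omega⟩
    rw [nat_card_step (m := ∑ i : Fin k, ((j i.succ : ℕ+) : ℕ)) j (by omega),
      ih (fun i => j i.succ) rfl]
    rw [List.ofFn_succ, coef_cons, wsum_ofFn]
    congr 2
    omega
/-- The coefficient of the monomial `d_{j_1}⋯d_{j_k}` in `MB_{n,k}` (the coefficient of `t^k` in
`MB_n(t)`) equals the number of set partitions `{π_1,…,π_k}` of `{1,…,n}` with
`card(π_ℓ) = j_ℓ` and `min(π_1) < ⋯ < min(π_k)`. -/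
theorem muntheKaas_coeff (n k : ℕ) (j : Fin k → ℕ+) (hsum : (∑ ℓ, (j ℓ : ℕ)) = n) :
    (((MB n).coeff (FreeMonoid.ofList (List.ofFn j))).coeff k : ℚ) =
      (Nat.card {p : Fin k → Finset (Fin n) //
          (∀ ℓ, (p ℓ).card = (j ℓ : ℕ)) ∧
          (∀ ℓ₁ ℓ₂, ℓ₁ ≠ ℓ₂ → Disjoint (p ℓ₁) (p ℓ₂)) ∧
          Finset.univ.biUnion p = Finset.univ ∧
          (∀ ℓ₁ ℓ₂, ℓ₁ < ℓ₂ → (p ℓ₁).min < (p ℓ₂).min)} : ℚ) := by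
  have h1 := MB_coeff_eq_coef n k j hsum
  have h2 := partition_count j hsum
  have h3 : Nat.card {p : Fin k → Finset (Fin n) //
          (∀ ℓ, (p ℓ).card = (j ℓ : ℕ)) ∧
          (∀ ℓ₁ ℓ₂, ℓ₁ ≠ ℓ₂ → Disjoint (p ℓ₁) (p ℓ₂)) ∧
          Finset.univ.biUnion p = Finset.univ ∧
          (∀ ℓ₁ ℓ₂, ℓ₁ < ℓ₂ → (p ℓ₁).min < (p ℓ₂).min)}
      = Nat.card {p : Fin k → Finset (Fin n) // Conds j p} := rfl
  rw [h1, h3, h2]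
end

section
/- For all natural numbers 1 ≤ k ≤ n, the number of idempotent endofunctions of an n-element set whose image has exactly k elements, i.e. the number of functions f : {1,…,n} → {1,…,n} with f ∘ f = f and card(image f) = k, equals C(n,k)·k^(n−k), where C denotes the binomial coefficient. -/
open Finset

/-- Auxiliary map: from a `k`-subset `s` and a map of its complement into `s`, build an
idempotent endofunction with image `s`. -/
def idemOfData (n k : ℕ)
    (p : Σ s : {s : Finset (Fin n) // s.card = k}, ((s.1ᶜ : Finset (Fin n)) → s.1)) :
    Fin n → Fin n :=
  fun x => if h : x ∈ p.1.1 then x else (p.2 ⟨x, Finset.mem_compl.2 h⟩).1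

lemma idemOfData_mem (n k : ℕ)
    (p : Σ s : {s : Finset (Fin n) // s.card = k}, ((s.1ᶜ : Finset (Fin n)) → s.1))
    (x : Fin n) : idemOfData n k p x ∈ p.1.1 := by
  unfold idemOfData
  split
  · assumption
  · exact (p.2 _).2

lemma idemOfData_fix (n k : ℕ)
    (p : Σ s : {s : Finset (Fin n) // s.card = k}, ((s.1ᶜ : Finset (Fin n)) → s.1))
    (x : Fin n) (hx : x ∈ p.1.1) : idemOfData n k p x = x := by
  unfold idemOfData
  simp [hx]

lemma idemOfData_image (n k : ℕ)
    (p : Σ s : {s : Finset (Fin n) // s.card = k}, ((s.1ᶜ : Finset (Fin n)) → s.1)) :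
    Finset.univ.image (idemOfData n k p) = p.1.1 := by
  apply Finset.Subset.antisymm
  · intro y hy
    obtain ⟨x, -, rfl⟩ := Finset.mem_image.1 hy
    exact idemOfData_mem n k p x
  · intro y hy
    exact Finset.mem_image.2 ⟨y, Finset.mem_univ y, idemOfData_fix n k p y hy⟩

/-- The number of idempotent endofunctions of `{1,…,n}` whose image has exactly `k` elements
equals `C(n,k)·k^(n−k)`. -/
theorem idempotent_endofunctions_card (n k : ℕ) (hk : 1 ≤ k) (hkn : k ≤ n) :
    Nat.card {f : Fin n → Fin n // f ∘ f = f ∧ (Finset.univ.image f).card = k} =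
      n.choose k * k ^ (n - k) := by
  let T := Σ s : {s : Finset (Fin n) // s.card = k}, ((s.1ᶜ : Finset (Fin n)) → s.1)
  let F : T → {f : Fin n → Fin n // f ∘ f = f ∧ (Finset.univ.image f).card = k} :=
    fun p => ⟨idemOfData n k p,
      funext fun x => idemOfData_fix n k p _ (idemOfData_mem n k p x),
      by rw [idemOfData_image]; exact p.1.2⟩
  have hFval : ∀ p, (F p).1 = idemOfData n k p := fun p => rfl
  have hbij : Function.Bijective F := by
    constructor
    · rintro ⟨s, g⟩ ⟨t, h⟩ heq
      have hval : idemOfData n k ⟨s, g⟩ = idemOfData n k ⟨t, h⟩ := by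
        have := congrArg Subtype.val heq
        simpa [hFval] using this
      have hst : s = t := by
        apply Subtype.ext
        rw [← idemOfData_image n k ⟨s, g⟩, ← idemOfData_image n k ⟨t, h⟩, hval]
      subst hst
      congr 1
      funext x
      apply Subtype.ext
      have := congrFun hval x.1
      have hx : x.1 ∉ s.1 := Finset.mem_compl.1 x.2
      unfold idemOfData at this
      simpa [hx] using this
    · rintro ⟨f, hf, hcard⟩
      have hfix : ∀ y ∈ Finset.univ.image f, f y = y := by
        intro y hy
        obtain ⟨x, -, rfl⟩ := Finset.mem_image.1 hy
        exact congrFun hf x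
      refine ⟨⟨⟨Finset.univ.image f, hcard⟩,
        fun x => ⟨f x.1, Finset.mem_image.2 ⟨x.1, Finset.mem_univ _, rfl⟩⟩⟩, ?_⟩
      apply Subtype.ext
      rw [hFval]
      funext x
      unfold idemOfData
      split
      · next hx => exact (hfix x hx).symm
      · rfl
  rw [← Nat.card_congr (Equiv.ofBijective F hbij)]
  show Nat.card T = _
  rw [Nat.card_eq_fintype_card, Fintype.card_sigma]
  have hconst : ∀ s : {s : Finset (Fin n) // s.card = k},
      Fintype.card ((s.1ᶜ : Finset (Fin n)) → s.1) = k ^ (n - k) := by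
    intro s
    rw [Fintype.card_fun]
    have h1 : Fintype.card s.1 = k := by rw [Fintype.card_coe]; exact s.2
    have h2 : Fintype.card (s.1ᶜ : Finset (Fin n)) = n - k := by
      rw [Fintype.card_coe, Finset.card_compl, s.2, Fintype.card_fin]
    rw [h1, h2]
  simp only [hconst, Finset.sum_const, smul_eq_mul, Finset.card_univ]
  rw [Fintype.card_finset_len, Fintype.card_fin]
end

section
/- For all natural numbers n ≥ k ≥ 1, the number of set partitions of {1,…,n} into k lists — i.e. the number of sets consisting of k nonempty lists with entries in {1,…,n}, each list having pairwise distinct entries, such that the sets of entries of the lists are pairwise disjoint and their union is {1,…,n} — equals C(n−1,k−1)·n!/k!, where C denotes the binomial coefficient. -/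
open Finset

namespace LahAux

variable {n k : ℕ}

/-- Ordered tuples of `k` nonempty lists whose concatenation is a nodup enumeration of `Fin n`. -/
abbrev A (n k : ℕ) : Type :=
  {p : List (List (Fin n)) // p.length = k ∧ (∀ l ∈ p, l ≠ []) ∧
    p.flatten.Nodup ∧ ∀ x : Fin n, x ∈ p.flatten}

/-- Nodup enumerations of `Fin n`. -/
abbrev B (n : ℕ) : Type := {l : List (Fin n) // l.Nodup ∧ ∀ x : Fin n, x ∈ l}

/-- Compositions of `n` with `k` parts. -/
abbrev C (n k : ℕ) : Type := {c : Composition n // c.length = k}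

lemma length_of_nodup_mem {l : List (Fin n)} (hnd : l.Nodup) (hmem : ∀ x : Fin n, x ∈ l) :
    l.length = n := by
  have h1 : l.toFinset = Finset.univ := by ext x; simp [hmem]
  have h2 := List.toFinset_card_of_nodup hnd
  rw [h1] at h2
  simpa using h2.symm

lemma B_length (l : B n) : l.1.length = n := length_of_nodup_mem l.2.1 l.2.2

lemma card_B : Nat.card (B n) = n.factorial := by
  have hF : Function.Bijective (fun σ : Equiv.Perm (Fin n) =>
      (⟨List.ofFn σ, List.nodup_ofFn.mpr σ.injective,
        fun x => by simpa [List.mem_ofFn] using ⟨σ.symm x, by simp⟩⟩ : B n)) := by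
    constructor
    · intro σ τ h
      have := List.ofFn_injective (congrArg Subtype.val h)
      exact Equiv.coe_fn_injective this
    · rintro ⟨l, hnd, hmem⟩
      have hl : l.length = n := length_of_nodup_mem hnd hmem
      have hinj : Function.Injective fun i : Fin n => l.get (Fin.cast hl.symm i) := by
        intro i j hij
        have := (List.nodup_iff_injective_get.mp hnd) hij
        simpa [Fin.ext_iff] using this
      refine ⟨Equiv.ofBijective _ ((Finite.injective_iff_bijective).mp hinj), ?_⟩
      apply Subtype.ext
      apply List.ext_get (by simp [hl])
      intro i h1 h2
      simp [List.get_ofFn, Equiv.ofBijective]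
  have hcard : Nat.card (B n) = Nat.card (Equiv.Perm (Fin n)) :=
    (Nat.card_eq_of_bijective _ hF).symm
  rw [hcard, Nat.card_eq_fintype_card, Fintype.card_perm, Fintype.card_fin]

lemma boundaries_card (hn : 1 ≤ n) (c : CompositionAsSet n) :
    c.boundaries.card = (compositionAsSetEquiv n c).card + 2 := by
  set s := compositionAsSetEquiv n c with hs
  have hmem : ∀ i : Fin (n - 1), i ∈ s ↔
      (⟨1 + (i : ℕ), by omega⟩ : Fin n.succ) ∈ c.boundaries := by
    intro i
    simp [hs, compositionAsSetEquiv, Set.mem_toFinset]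
  have hf : Function.Injective (fun i : Fin (n - 1) =>
      (⟨1 + (i : ℕ), by omega⟩ : Fin n.succ)) := by
    intro i j hij
    simpa [Fin.ext_iff] using hij
  have hset : c.boundaries = insert 0 (insert (Fin.last n)
      (s.image (fun i : Fin (n - 1) => (⟨1 + (i : ℕ), by omega⟩ : Fin n.succ)))) := by
    ext j
    simp only [Finset.mem_insert, Finset.mem_image]
    constructor
    · intro hj
      by_cases h0 : j = 0
      · exact Or.inl h0
      by_cases hlast : j = Fin.last n
      · exact Or.inr (Or.inl hlast)
      refine Or.inr (Or.inr ⟨⟨(j : ℕ) - 1, ?_⟩, ?_, ?_⟩)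
      · have hj0 : (j : ℕ) ≠ 0 := fun h => h0 (Fin.ext h)
        have hjn : (j : ℕ) ≠ n := fun h => hlast (Fin.ext (by simpa using h))
        have := j.2
        omega
      · rw [hmem]
        convert hj using 2
        have hj0 : (j : ℕ) ≠ 0 := fun h => h0 (Fin.ext h)
        simp only [Fin.ext_iff]
        omega
      · have hj0 : (j : ℕ) ≠ 0 := fun h => h0 (Fin.ext h)
        simp only [Fin.ext_iff]
        omega
    · rintro (rfl | rfl | ⟨i, hi, rfl⟩)
      · exact c.zero_mem
      · exact c.getLast_mem
      · exact (hmem i).mp hi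
  have hl : Fin.last n ∉ s.image (fun i : Fin (n - 1) => (⟨1 + (i : ℕ), by omega⟩ : Fin n.succ)) := by
    intro h
    rcases Finset.mem_image.mp h with ⟨i, _, hi⟩
    have := congrArg Fin.val hi
    have h2 := i.2
    simp [Fin.last] at this
    omega
  have h0 : (0 : Fin n.succ) ∉ insert (Fin.last n)
      (s.image (fun i : Fin (n - 1) => (⟨1 + (i : ℕ), by omega⟩ : Fin n.succ))) := by
    intro h
    rcases Finset.mem_insert.mp h with h | h
    · have := congrArg Fin.val h
      simp [Fin.last] at this
      omega
    · rcases Finset.mem_image.mp h with ⟨i, _, hi⟩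
      have := congrArg Fin.val hi
      simp at this
  rw [hset, Finset.card_insert_of_notMem h0, Finset.card_insert_of_notMem hl,
    Finset.card_image_of_injective _ hf]

lemma lengthAsSet_eq (hn : 1 ≤ n) (c : CompositionAsSet n) :
    c.length = (compositionAsSetEquiv n c).card + 1 := by
  have h1 := c.card_boundaries_eq_succ_length
  have h2 := boundaries_card hn c
  omega

lemma card_C (hn : 1 ≤ n) (hk : 1 ≤ k) :
    Nat.card (C n k) = (n - 1).choose (k - 1) := by
  have hG : Function.Bijective (fun c : C n k =>
      (⟨compositionAsSetEquiv n c.1.toCompositionAsSet, by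
          have := lengthAsSet_eq hn c.1.toCompositionAsSet
          rw [Composition.toCompositionAsSet_length, c.2] at this
          omega⟩ : {s : Finset (Fin (n - 1)) // s.card = k - 1})) := by
    constructor
    · intro c₁ c₂ h
      apply Subtype.ext
      have h1 := (compositionAsSetEquiv n).injective (congrArg Subtype.val h)
      exact (compositionEquiv n).injective h1
    · rintro ⟨s, hs⟩
      set d := (compositionAsSetEquiv n).symm s with hd
      have heq : compositionAsSetEquiv n d = s := (compositionAsSetEquiv n).apply_symm_apply s
      have hlen : d.toComposition.length = k := by
        rw [CompositionAsSet.toComposition_length, lengthAsSet_eq hn d, heq, hs]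
        omega
      refine ⟨⟨d.toComposition, hlen⟩, ?_⟩
      apply Subtype.ext
      have : d.toComposition.toCompositionAsSet = d := (compositionEquiv n).apply_symm_apply d
      simp only [this, heq]
  have hcard : Nat.card (C n k) =
      Nat.card {s : Finset (Fin (n - 1)) // s.card = k - 1} :=
    Nat.card_eq_of_bijective _ hG
  rw [hcard, Nat.card_eq_fintype_card, Fintype.card_finset_len, Fintype.card_fin]


lemma flatten_length (p : A n k) : p.1.flatten.length = n :=
  length_of_nodup_mem p.2.2.2.1 p.2.2.2.2

/-- The composition transported to a composition of `l.length`. -/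
def comp' (c : Composition n) (l : B n) : Composition l.1.length :=
  ⟨c.blocks, c.blocks_pos, by rw [B_length l]; exact c.blocks_sum⟩

def FAB (x : C n k × B n) : A n k :=
  ⟨x.2.1.splitWrtComposition (comp' x.1.1 x.2), by
    have hflat := x.2.1.flatten_splitWrtComposition (comp' x.1.1 x.2)
    have hmaplen := x.2.1.map_length_splitWrtComposition (comp' x.1.1 x.2)
    refine ⟨?_, ?_, ?_, ?_⟩
    · rw [List.length_splitWrtComposition]; exact x.1.2
    · intro l' hl' hne
      have h1 : l'.length ∈ (x.2.1.splitWrtComposition (comp' x.1.1 x.2)).map List.length :=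
        List.mem_map_of_mem hl'
      rw [hmaplen] at h1
      have h2 := x.1.1.blocks_pos h1
      rw [hne] at h2
      simp at h2
    · rw [hflat]; exact x.2.2.1
    · intro y; rw [hflat]; exact x.2.2.2 y⟩

lemma FAB_bij : Function.Bijective (FAB : C n k × B n → A n k) := by
  constructor
  · rintro ⟨⟨c₁, hc₁⟩, l₁⟩ ⟨⟨c₂, hc₂⟩, l₂⟩ h
    have h' := congrArg Subtype.val h
    simp only [FAB] at h'
    have hl : l₁ = l₂ := by
      apply Subtype.ext
      rw [← l₁.1.flatten_splitWrtComposition (comp' c₁ l₁),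
        ← l₂.1.flatten_splitWrtComposition (comp' c₂ l₂), h']
    have hc : c₁ = c₂ := by
      apply Composition.ext
      have e1 := l₁.1.map_length_splitWrtComposition (comp' c₁ l₁)
      have e2 := l₂.1.map_length_splitWrtComposition (comp' c₂ l₂)
      rw [h'] at e1
      exact e1.symm.trans e2
    subst hl hc
    rfl
  · rintro ⟨p, hp1, hp2, hp3, hp4⟩
    have hsum : (p.map List.length).sum = n := by
      rw [← List.length_flatten]
      exact length_of_nodup_mem hp3 hp4
    have hpos : ∀ {i}, i ∈ p.map List.length → 0 < i := by
      intro i hi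
      rcases List.mem_map.mp hi with ⟨l, hl, rfl⟩
      exact List.length_pos_iff.mpr (hp2 l hl)
    let c₀ : Composition n := ⟨p.map List.length, hpos, hsum⟩
    have hc₀ : c₀.length = k := by
      simpa [c₀, Composition.length] using hp1
    refine ⟨⟨⟨c₀, hc₀⟩, ⟨p.flatten, hp3, hp4⟩⟩, ?_⟩
    apply Subtype.ext
    exact List.splitWrtComposition_flatten p _ rfl

instance : Finite (B n) := by
  apply Finite.of_injective
    (fun l : B n => fun i : Fin n => l.1.get ⟨i.1, by rw [B_length l]; exact i.2⟩)
  intro l₁ l₂ h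
  apply Subtype.ext
  apply List.ext_get (by rw [B_length, B_length])
  intro i h1 h2
  exact congrFun h ⟨i, by rw [← B_length l₁]; exact h1⟩

instance : Finite (A n k) := Finite.of_surjective FAB FAB_bij.surjective

lemma card_A (hn : 1 ≤ n) (hk : 1 ≤ k) :
    Nat.card (A n k) = (n - 1).choose (k - 1) * n.factorial := by
  have h : Nat.card (A n k) = Nat.card (C n k × B n) :=
    (Nat.card_eq_of_bijective _ FAB_bij).symm
  rw [h, Nat.card_prod, card_C hn hk, card_B]

/-- Set partitions of `Fin n` into `k` lists. -/
abbrev P (n k : ℕ) : Type :=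
  {S : Finset (List (Fin n)) //
    (∀ l ∈ S, l ≠ [] ∧ l.Nodup) ∧
    (∀ l₁ ∈ S, ∀ l₂ ∈ S, l₁ ≠ l₂ → ∀ x : Fin n, x ∈ l₁ → x ∉ l₂) ∧
    (∀ x : Fin n, ∃ l ∈ S, x ∈ l) ∧
    S.card = k}

def G2 (y : Σ S : P n k, (Fin k ≃ {x // x ∈ S.1})) : A n k :=
  ⟨List.ofFn (fun i => ((y.2 i : List (Fin n)))), by
    obtain ⟨S, e⟩ := y
    have hmem : ∀ l : List (Fin n), l ∈ List.ofFn (fun i => (e i : List (Fin n))) ↔ l ∈ S.1 := by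
      intro l
      rw [List.mem_ofFn]
      constructor
      · rintro ⟨i, rfl⟩; exact (e i).2
      · intro hl; exact ⟨e.symm ⟨l, hl⟩, by simp⟩
    refine ⟨by simp, ?_, ?_, ?_⟩
    · intro l hl; exact (S.2.1 l ((hmem l).mp hl)).1
    · rw [List.nodup_flatten]
      constructor
      · intro l hl; exact (S.2.1 l ((hmem l).mp hl)).2
      · rw [List.pairwise_ofFn]
        intro i j hij
        have hne : ((e i : List (Fin n))) ≠ (e j : List (Fin n)) := by
          intro hcontra
          exact absurd (e.injective (Subtype.ext hcontra)) hij.ne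
        intro x hx
        exact S.2.2.1 _ (e i).2 _ (e j).2 hne x hx
    · intro x
      rcases S.2.2.2.1 x with ⟨l, hl, hx⟩
      exact List.mem_flatten.mpr ⟨l, (hmem l).mpr hl, hx⟩⟩

lemma G2_bij : Function.Bijective (G2 : (Σ S : P n k, (Fin k ≃ {x // x ∈ S.1})) → A n k) := by
  constructor
  · rintro ⟨S₁, e₁⟩ ⟨S₂, e₂⟩ h
    have h' : List.ofFn (fun i => ((e₁ i : List (Fin n)))) =
        List.ofFn (fun i => ((e₂ i : List (Fin n)))) := congrArg Subtype.val h
    have hmem : ∀ (S : P n k) (e : Fin k ≃ {x // x ∈ S.1}) (l : List (Fin n)),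
        l ∈ List.ofFn (fun i => (e i : List (Fin n))) ↔ l ∈ S.1 := by
      intro S e l
      rw [List.mem_ofFn]
      constructor
      · rintro ⟨i, rfl⟩; exact (e i).2
      · intro hl; exact ⟨e.symm ⟨l, hl⟩, by simp⟩
    have hS : S₁ = S₂ := by
      apply Subtype.ext
      ext l
      rw [← hmem S₁ e₁ l, ← hmem S₂ e₂ l, h']
    subst hS
    have he : e₁ = e₂ :=
      Equiv.ext fun i => Subtype.ext (congrFun (List.ofFn_injective h') i)
    rw [he]
  · rintro ⟨p, hp1, hp2, hp3, hp4⟩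
    obtain ⟨hnodups, hdisj⟩ := List.nodup_flatten.mp hp3
    have hpnd : p.Nodup := by
      apply hdisj.imp_of_mem
      intro a b ha hb hab
      intro hcontra
      subst hcontra
      rcases List.exists_mem_of_ne_nil a (hp2 a ha) with ⟨x, hx⟩
      exact hab hx hx
    have hdisj' : ∀ l₁ ∈ p, ∀ l₂ ∈ p, l₁ ≠ l₂ → l₁.Disjoint l₂ := by
      have hsymm : Symmetric (List.Disjoint : List (Fin n) → List (Fin n) → Prop) :=
        fun a b hab => hab.symm
      intro l₁ h₁ l₂ h₂ hne
      haveI : Std.Symm (List.Disjoint : List (Fin n) → List (Fin n) → Prop) := ⟨hsymm⟩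
      exact hdisj.forall h₁ h₂ hne
    have hScard : p.toFinset.card = k := by
      rw [List.toFinset_card_of_nodup hpnd, hp1]
    refine ⟨⟨⟨p.toFinset, ?_, ?_, ?_, hScard⟩, ?_⟩, ?_⟩
    · intro l hl
      rw [List.mem_toFinset] at hl
      exact ⟨hp2 l hl, hnodups l hl⟩
    · intro l₁ h₁ l₂ h₂ hne x hx
      rw [List.mem_toFinset] at h₁ h₂
      exact hdisj' l₁ h₁ l₂ h₂ hne hx
    · intro x
      rcases List.mem_flatten.mp (hp4 x) with ⟨l, hl, hx⟩
      exact ⟨l, List.mem_toFinset.mpr hl, hx⟩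
    · refine Equiv.ofBijective
        (fun i : Fin k => (⟨p.get ⟨i.1, by rw [hp1]; exact i.2⟩, by
          rw [List.mem_toFinset]; exact p.get_mem _⟩ : {x // x ∈ p.toFinset})) ?_
      rw [Fintype.bijective_iff_injective_and_card]
      constructor
      · intro i j hij
        have := List.nodup_iff_injective_get.mp hpnd (Subtype.ext_iff.mp hij)
        simpa [Fin.ext_iff] using this
      · rw [Fintype.card_coe, hScard, Fintype.card_fin]
    · apply Subtype.ext
      simp only [G2]
      apply List.ext_get (by simp [hp1])
      intro i h1 h2
      simp [List.get_ofFn, Equiv.ofBijective]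

instance : Finite (Σ S : P n k, (Fin k ≃ {x // x ∈ S.1})) :=
  Finite.of_injective G2 G2_bij.injective

lemma fiber_nonempty (S : P n k) : Nonempty (Fin k ≃ {x // x ∈ S.1}) := by
  have : Fintype.card {x // x ∈ S.1} = k := by
    rw [Fintype.card_coe, S.2.2.2.2]
  exact ⟨(Fintype.equivFinOfCardEq this).symm⟩

instance : Finite (P n k) := by
  apply Finite.of_surjective (Sigma.fst : (Σ S : P n k, (Fin k ≃ {x // x ∈ S.1})) → P n k)
  intro S
  exact ⟨⟨S, (fiber_nonempty S).some⟩, rfl⟩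

lemma key (hk : 1 ≤ k) (hkn : k ≤ n) :
    Nat.card (P n k) * k.factorial = (n - 1).choose (k - 1) * n.factorial := by
  have hn : 1 ≤ n := hk.trans hkn
  have h1 : Nat.card (A n k) = Nat.card (Σ S : P n k, (Fin k ≃ {x // x ∈ S.1})) :=
    (Nat.card_eq_of_bijective _ G2_bij).symm
  have := Fintype.ofFinite (P n k)
  have h2 : Nat.card (Σ S : P n k, (Fin k ≃ {x // x ∈ S.1})) =
      Nat.card (P n k) * k.factorial := by
    rw [Nat.card_eq_fintype_card, Fintype.card_sigma, Nat.card_eq_fintype_card]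
    have h3 : ∀ S : P n k, Fintype.card (Fin k ≃ {x // x ∈ S.1}) = k.factorial := by
      intro S
      rw [Fintype.card_equiv (fiber_nonempty S).some, Fintype.card_fin]
    simp only [h3]
    rw [Finset.sum_const, Finset.card_univ, smul_eq_mul]
  rw [← h2, ← h1, card_A hn hk]

end LahAux

/-- The number of set partitions of `{1,…,n}` into `k` lists — sets of `k` nonempty lists of
pairwise distinct elements of `{1,…,n}`, with pairwise disjoint sets of entries whose union is
all of `{1,…,n}` — equals `C(n−1,k−1)·n!/k!` (the unsigned Lah number). -/
theorem partitions_into_lists_card (n k : ℕ) (hk : 1 ≤ k) (hkn : k ≤ n) :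
    (Nat.card {S : Finset (List (Fin n)) //
        (∀ l ∈ S, l ≠ [] ∧ l.Nodup) ∧
        (∀ l₁ ∈ S, ∀ l₂ ∈ S, l₁ ≠ l₂ → ∀ x : Fin n, x ∈ l₁ → x ∉ l₂) ∧
        (∀ x : Fin n, ∃ l ∈ S, x ∈ l) ∧
        S.card = k} : ℚ) =
      ((n - 1).choose (k - 1) : ℚ) * (n.factorial : ℚ) / (k.factorial : ℚ) := by
  have hkey : Nat.card (LahAux.P n k) * k.factorial =
      (n - 1).choose (k - 1) * n.factorial := LahAux.key hk hkn
  rw [eq_div_iff (by exact_mod_cast k.factorial_ne_zero)]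
  exact_mod_cast hkey
end
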